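/- arXiv:2405.04616 — 5 statements merged into one kernel-verified Lean document; each statement's English description precedes it below -/
import Mathlib

section
/- A Banach algebra 𝔘 is symmetrically pseudo-amenable if and only if there exists a net {t_λ} in the projective tensor product 𝔘 ⊗̂ 𝔘 such that for all a ∈ 𝔘: (i) a·t_λ − t_λ·a → 0, (ii) π(t_λ)a → a, (iii) a∘t_λ − t_λ∘a → 0, and (iv) a·π°(t_λ) → a. -/
open Filter Topology

universe u

/-- A realization of the projective Banach-space tensor square `A ⊗̂ A` of a (non-unital)
Banach algebra `A`, together with the canonical bimodule operations `a•t`, `t•a`, the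
"opposite" operations `a∘t`, `t∘a`, the product maps `π`, `π°` and the flip map, each
characterized by its values on elementary tensors.  The norm is the projective tensor norm:
`‖a ⊗ b‖ ≤ ‖a‖‖b‖` and every element is an absolutely convergent sum of elementary tensors
whose total norm is arbitrarily close to its norm; moreover bounded bilinear maps lift. -/
structure ProjTensorSquare (A : Type u) [NonUnitalNormedRing A] [NormedSpace ℂ A]
    [IsScalarTower ℂ A A] [SMulCommClass ℂ A A] [CompleteSpace A] where
  /-- the underlying Banach space of `A ⊗̂ A` -/
  T : Type u
  [nacg : NormedAddCommGroup T]
  [nsp : NormedSpace ℂ T]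
  [cplt : CompleteSpace T]
  /-- the canonical bilinear map `(a, b) ↦ a ⊗ b` -/
  tmul : A →L[ℂ] A →L[ℂ] T
  norm_tmul_le : ∀ a b : A, ‖tmul a b‖ ≤ ‖a‖ * ‖b‖
  /-- the projective norm property -/
  exists_rep : ∀ (t : T) (ε : ℝ), 0 < ε → ∃ u v : ℕ → A,
      Summable (fun n => ‖u n‖ * ‖v n‖) ∧ HasSum (fun n => tmul (u n) (v n)) t ∧
      ∑' n, ‖u n‖ * ‖v n‖ ≤ ‖t‖ + ε
  /-- the universal property: bounded bilinear maps into a Banach space lift to `T` -/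
  lift : ∀ {X : Type u} [NormedAddCommGroup X] [NormedSpace ℂ X] [CompleteSpace X]
      (f : A →L[ℂ] A →L[ℂ] X), ∃ g : T →L[ℂ] X, (∀ a b, g (tmul a b) = f a b) ∧ ‖g‖ ≤ ‖f‖
  /-- the left module action: `a • (b ⊗ c) = (a * b) ⊗ c` -/
  lmul : A → T →L[ℂ] T
  lmul_tmul : ∀ a b c, lmul a (tmul b c) = tmul (a * b) c
  /-- the right module action: `(b ⊗ c) • a = b ⊗ (c * a)` -/
  rmul : A → T →L[ℂ] T
  rmul_tmul : ∀ a b c, rmul a (tmul b c) = tmul b (c * a)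
  /-- the left opposite action: `a ∘ (b ⊗ c) = b ⊗ (a * c)` -/
  lcirc : A → T →L[ℂ] T
  lcirc_tmul : ∀ a b c, lcirc a (tmul b c) = tmul b (a * c)
  /-- the right opposite action: `(b ⊗ c) ∘ a = (b * a) ⊗ c` -/
  rcirc : A → T →L[ℂ] T
  rcirc_tmul : ∀ a b c, rcirc a (tmul b c) = tmul (b * a) c
  /-- the product map `π : b ⊗ c ↦ b * c` -/
  π : T →L[ℂ] A
  π_tmul : ∀ b c, π (tmul b c) = b * c
  /-- the opposite product map `π° : b ⊗ c ↦ c * b` -/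
  πop : T →L[ℂ] A
  πop_tmul : ∀ b c, πop (tmul b c) = c * b
  /-- the flip map `(b ⊗ c)° = c ⊗ b` -/
  flip : T →L[ℂ] T
  flip_tmul : ∀ b c, flip (tmul b c) = tmul c b

attribute [instance] ProjTensorSquare.nacg ProjTensorSquare.nsp ProjTensorSquare.cplt

namespace ProjTensorSquare

variable {A : Type u} [NonUnitalNormedRing A] [NormedSpace ℂ A]
    [IsScalarTower ℂ A A] [SMulCommClass ℂ A A] [CompleteSpace A]

/-- `t` is an approximate diagonal for `A` consisting of symmetric tensors, along the
filter `l`:  each `t i` is symmetric, `a • tᵢ - tᵢ • a → 0` and `π(tᵢ) a → a` for all `a`. -/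
def IsSymmApproxDiagonal (P : ProjTensorSquare A) {ι : Type u} (l : Filter ι)
    (t : ι → P.T) : Prop :=
  (∀ i, P.flip (t i) = t i) ∧
  (∀ a : A, Tendsto (fun i => P.lmul a (t i) - P.rmul a (t i)) l (𝓝 0)) ∧
  (∀ a : A, Tendsto (fun i => P.π (t i) * a) l (𝓝 a))

/-- A Banach algebra is symmetrically pseudo-amenable if it has a (not necessarily bounded)
approximate diagonal consisting of symmetric tensors. -/
def SymmPseudoAmenable (P : ProjTensorSquare A) : Prop :=
  ∃ (ι : Type u) (l : Filter ι) (t : ι → P.T), l.NeBot ∧ P.IsSymmApproxDiagonal l t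

end ProjTensorSquare


section Aux

variable {A : Type u} [NonUnitalNormedRing A] [NormedSpace ℂ A]
    [IsScalarTower ℂ A A] [SMulCommClass ℂ A A] [CompleteSpace A] (P : ProjTensorSquare A)

theorem ProjTensorSquare.map_eq {X : Type u} [NormedAddCommGroup X] [NormedSpace ℂ X]
    (f g : P.T →L[ℂ] X) (h : ∀ a b, f (P.tmul a b) = g (P.tmul a b)) (t : P.T) :
    f t = g t := by
  obtain ⟨u, v, -, hsum, -⟩ := P.exists_rep t 1 one_pos
  have hf := f.hasSum hsum
  simp only [h] at hf
  exact hf.unique (g.hasSum hsum)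

theorem ProjTensorSquare.flip_flip (t : P.T) : P.flip (P.flip t) = t :=
  P.map_eq (P.flip.comp P.flip) (ContinuousLinearMap.id ℂ P.T)
    (by simp [P.flip_tmul]) t

theorem ProjTensorSquare.pi_lmul (a : A) (t : P.T) : P.π (P.lmul a t) = a * P.π t :=
  P.map_eq (P.π.comp (P.lmul a)) ((ContinuousLinearMap.mul ℂ A a).comp P.π)
    (by simp [P.π_tmul, P.lmul_tmul, mul_assoc]) t

theorem ProjTensorSquare.pi_rmul (a : A) (t : P.T) : P.π (P.rmul a t) = P.π t * a :=
  P.map_eq (P.π.comp (P.rmul a)) (((ContinuousLinearMap.mul ℂ A).flip a).comp P.π)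
    (by simp [P.π_tmul, P.rmul_tmul, mul_assoc]) t

theorem ProjTensorSquare.piop_lcirc (a : A) (t : P.T) : P.πop (P.lcirc a t) = a * P.πop t :=
  P.map_eq (P.πop.comp (P.lcirc a)) ((ContinuousLinearMap.mul ℂ A a).comp P.πop)
    (by simp [P.πop_tmul, P.lcirc_tmul, mul_assoc]) t

theorem ProjTensorSquare.piop_rcirc (a : A) (t : P.T) : P.πop (P.rcirc a t) = P.πop t * a :=
  P.map_eq (P.πop.comp (P.rcirc a)) (((ContinuousLinearMap.mul ℂ A).flip a).comp P.πop)
    (by simp [P.πop_tmul, P.rcirc_tmul, mul_assoc]) t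

theorem ProjTensorSquare.pi_flip (t : P.T) : P.π (P.flip t) = P.πop t :=
  P.map_eq (P.π.comp P.flip) P.πop (by simp [P.π_tmul, P.flip_tmul, P.πop_tmul]) t

theorem ProjTensorSquare.flip_lcirc (a : A) (t : P.T) :
    P.flip (P.lcirc a t) = P.lmul a (P.flip t) :=
  P.map_eq (P.flip.comp (P.lcirc a)) ((P.lmul a).comp P.flip)
    (by simp [P.flip_tmul, P.lcirc_tmul, P.lmul_tmul]) t

theorem ProjTensorSquare.flip_rcirc (a : A) (t : P.T) :
    P.flip (P.rcirc a t) = P.rmul a (P.flip t) :=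
  P.map_eq (P.flip.comp (P.rcirc a)) ((P.rmul a).comp P.flip)
    (by simp [P.flip_tmul, P.rcirc_tmul, P.rmul_tmul]) t

end Aux

/-- A Banach algebra `𝔘` is symmetrically pseudo-amenable if and only if there
exists a net `{t_λ}` in `𝔘 ⊗̂ 𝔘` such that for all `a ∈ 𝔘`: (i) `a·t_λ − t_λ·a → 0`,
(ii) `π(t_λ)a → a`, (iii) `a∘t_λ − t_λ∘a → 0`, and (iv) `a·π°(t_λ) → a`. -/
theorem symmPseudoAmenable_iff {A : Type u} [NonUnitalNormedRing A] [NormedSpace ℂ A]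
    [IsScalarTower ℂ A A] [SMulCommClass ℂ A A] [CompleteSpace A] (P : ProjTensorSquare A) :
    P.SymmPseudoAmenable ↔
      ∃ (ι : Type u) (l : Filter ι) (t : ι → P.T), l.NeBot ∧
        (∀ a : A, Tendsto (fun i => P.lmul a (t i) - P.rmul a (t i)) l (𝓝 0)) ∧
        (∀ a : A, Tendsto (fun i => P.π (t i) * a) l (𝓝 a)) ∧
        (∀ a : A, Tendsto (fun i => P.lcirc a (t i) - P.rcirc a (t i)) l (𝓝 0)) ∧
        (∀ a : A, Tendsto (fun i => a * P.πop (t i)) l (𝓝 a)) := by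
  constructor
  · rintro ⟨ι, l, t, hne, hsymm, h1, h2⟩
    refine ⟨ι, l, t, hne, h1, h2, ?_, ?_⟩
    · intro a
      have key : ∀ i, P.lcirc a (t i) - P.rcirc a (t i)
          = P.flip (P.lmul a (t i) - P.rmul a (t i)) := by
        intro i
        have hl : P.lcirc a (t i) = P.flip (P.lmul a (t i)) := by
          have := P.flip_lcirc a (t i)
          rw [hsymm i] at this
          rw [← this, P.flip_flip]
        have hr : P.rcirc a (t i) = P.flip (P.rmul a (t i)) := by
          have := P.flip_rcirc a (t i)
          rw [hsymm i] at this
          rw [← this, P.flip_flip]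
        rw [hl, hr, map_sub]
      simp only [key]
      have := (P.flip.continuous.tendsto 0).comp (h1 a)
      simpa [Function.comp_def, map_sub] using this
    · intro a
      have hpi : ∀ i, P.πop (t i) = P.π (t i) := by
        intro i; rw [← P.pi_flip, hsymm i]
      have h3 : Tendsto (fun i => a * P.π (t i) - P.π (t i) * a) l (𝓝 0) := by
        have := (P.π.continuous.tendsto 0).comp (h1 a)
        simp only [Function.comp_def, map_sub, P.pi_lmul, P.pi_rmul, map_zero] at this
        exact this
      have := h3.add (h2 a)
      simp only [sub_add_cancel, zero_add] at this
      simp only [hpi]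
      exact this
  · rintro ⟨ι, l, t, hne, h1, h2, h3, h4⟩
    refine ⟨ι, l, fun i => (2⁻¹ : ℂ) • (t i + P.flip (t i)), hne, ?_, ?_, ?_⟩
    · intro i
      simp [map_add, P.flip_flip, add_comm]
    · intro a
      have key : ∀ i, P.lmul a ((2⁻¹ : ℂ) • (t i + P.flip (t i)))
            - P.rmul a ((2⁻¹ : ℂ) • (t i + P.flip (t i)))
          = (2⁻¹ : ℂ) • ((P.lmul a (t i) - P.rmul a (t i))
            + P.flip (P.lcirc a (t i) - P.rcirc a (t i))) := by
        intro i
        simp only [map_smul, map_add, map_sub, P.flip_lcirc, P.flip_rcirc, smul_sub, smul_add]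
        abel
      simp only [key]
      have hfl : Tendsto (fun i => P.flip (P.lcirc a (t i) - P.rcirc a (t i))) l (𝓝 0) := by
        have := (P.flip.continuous.tendsto 0).comp (h3 a)
        simpa [Function.comp_def, map_sub] using this
      have := ((h1 a).add hfl).const_smul (2⁻¹ : ℂ)
      simpa [Function.comp_def, map_sub] using this
    · intro a
      have hpiopa : Tendsto (fun i => P.πop (t i) * a) l (𝓝 a) := by
        have hcomm : Tendsto (fun i => a * P.πop (t i) - P.πop (t i) * a) l (𝓝 0) := by
          have := (P.πop.continuous.tendsto 0).comp (h3 a)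
          simp only [Function.comp_def, map_sub, P.piop_lcirc, P.piop_rcirc, map_zero] at this
          exact this
        have := (h4 a).sub hcomm
        simpa [Function.comp_def, map_sub] using this
      have key : ∀ i, P.π ((2⁻¹ : ℂ) • (t i + P.flip (t i))) * a
          = (2⁻¹ : ℂ) • (P.π (t i) * a + P.πop (t i) * a) := by
        intro i
        simp only [map_smul, map_add, P.pi_flip, smul_mul_assoc, add_mul]
      simp only [key]
      have := ((h2 a).add hpiopa).const_smul (2⁻¹ : ℂ)
      have h2a : (2⁻¹ : ℂ) • (a + a) = a := by
        rw [← two_smul ℂ a, smul_smul]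
        norm_num
      rwa [h2a] at this
end

section
/- If 𝔘 is a symmetrically pseudo-amenable Banach algebra and z ≠ 0 is an element of the center Z(𝔘), then there is a net {f_λ} of bounded linear functionals on 𝔘 such that f_λ(ab − ba) → 0 for all a, b ∈ 𝔘 and f_λ(z) → 1. -/
open Filter Topology

universe u

/-!
Pick `φ` with `φ z = 1` and put `f_λ(a) = φ (S t_λ a)`, where `S (u ⊗ w) a = u * a * w`.
Then `S t (ab - ba) = -π (b ∘ (a ∘ t - t ∘ a))`, and `a ∘ t - t ∘ a` is the flip of
`a • t - t • a`, which tends to `0` along the diagonal because every `t_λ` is symmetric.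
Since `z` is central, `S t z = π(t) z`, so `f_λ(z) → φ z = 1`.
-/

namespace ProjTensorSquare

variable {A : Type u} [NonUnitalNormedRing A] [NormedSpace ℂ A]
    [IsScalarTower ℂ A A] [SMulCommClass ℂ A A] [CompleteSpace A] (P : ProjTensorSquare A)

theorem ext_tmul {X : Type*} [NormedAddCommGroup X] [NormedSpace ℂ X] {g g' : P.T →L[ℂ] X}
    (h : ∀ a b, g (P.tmul a b) = g' (P.tmul a b)) (t : P.T) : g t = g' t := by
  obtain ⟨u, v, -, hsum, -⟩ := P.exists_rep t 1 one_pos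
  exact (g.hasSum hsum).unique (by simpa only [h] using g'.hasSum hsum)

theorem flip_lmul (a : A) (s : P.T) : P.flip (P.lmul a s) = P.lcirc a (P.flip s) :=
  P.ext_tmul (g := P.flip.comp (P.lmul a)) (g' := (P.lcirc a).comp P.flip)
    (fun u w => by simp [P.lmul_tmul, P.flip_tmul, P.lcirc_tmul]) s

theorem flip_rmul (a : A) (s : P.T) : P.flip (P.rmul a s) = P.rcirc a (P.flip s) :=
  P.ext_tmul (g := P.flip.comp (P.rmul a)) (g' := (P.rcirc a).comp P.flip)
    (fun u w => by simp [P.rmul_tmul, P.flip_tmul, P.rcirc_tmul]) s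

noncomputable def sandwich : P.T →L[ℂ] A →L[ℂ] A :=
  (P.lift (ContinuousLinearMap.mulLeftRight ℂ A)).choose

theorem sandwich_tmul (u w a : A) : P.sandwich (P.tmul u w) a = u * a * w := by
  rw [sandwich, (P.lift _).choose_spec.1, ContinuousLinearMap.mulLeftRight_apply]

theorem sandwich_mul_sub_mul (s : P.T) (a b : A) :
    P.sandwich s (a * b - b * a) = -P.π (P.lcirc b (P.lcirc a s - P.rcirc a s)) := by
  have key := P.ext_tmul
    (g := (ContinuousLinearMap.apply ℂ A (a * b - b * a)).comp P.sandwich)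
    (g' := -(P.π.comp ((P.lcirc b).comp (P.lcirc a - P.rcirc a))))
    (fun u w => by
      simp [sandwich_tmul, P.lcirc_tmul, P.rcirc_tmul, P.π_tmul, mul_assoc])
  simpa using key s

theorem sandwich_apply_of_commute (s : P.T) {z : A} (hz : ∀ a, z * a = a * z) :
    P.sandwich s z = P.π s * z := by
  refine P.ext_tmul (g := (ContinuousLinearMap.apply ℂ A z).comp P.sandwich)
    (g' := ((ContinuousLinearMap.mul ℂ A).flip z).comp P.π) (fun u w => ?_) s
  simp [sandwich_tmul, P.π_tmul, mul_assoc, hz w]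

namespace IsSymmApproxDiagonal

variable {P} {ι : Type u} {l : Filter ι} {t : ι → P.T}

theorem tendsto_lcirc_sub_rcirc (ht : P.IsSymmApproxDiagonal l t) (a : A) :
    Tendsto (fun i => P.lcirc a (t i) - P.rcirc a (t i)) l (𝓝 0) := by
  have h := (P.flip.continuous.tendsto 0).comp (ht.2.1 a)
  rw [map_zero] at h
  refine h.congr fun i => ?_
  simp only [Function.comp_apply, map_sub, flip_lmul, flip_rmul, ht.1 i]

theorem tendsto_sandwich_commutator (ht : P.IsSymmApproxDiagonal l t) (a b : A) :
    Tendsto (fun i => P.sandwich (t i) (a * b - b * a)) l (𝓝 0) := by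
  have h := ((P.π.comp (P.lcirc b)).continuous.tendsto 0).comp (ht.tendsto_lcirc_sub_rcirc a)
  rw [map_zero] at h
  simpa only [sandwich_mul_sub_mul, neg_zero, Function.comp_def,
    ContinuousLinearMap.comp_apply] using h.neg

theorem tendsto_sandwich_of_commute (ht : P.IsSymmApproxDiagonal l t) {z : A}
    (hz : ∀ a, z * a = a * z) : Tendsto (fun i => P.sandwich (t i) z) l (𝓝 z) := by
  simpa only [sandwich_apply_of_commute _ _ hz] using ht.2.2 z

end IsSymmApproxDiagonal

end ProjTensorSquare

/-- If `𝔘` is a symmetrically pseudo-amenable Banach algebra and `z ≠ 0` is an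
element of the center `Z(𝔘)`, then there is a net `{f_λ}` of bounded linear functionals on `𝔘`
such that `f_λ(ab − ba) → 0` for all `a, b ∈ 𝔘` and `f_λ(z) → 1`. -/
theorem exists_approx_trace_functional {A : Type u} [NonUnitalNormedRing A] [NormedSpace ℂ A]
    [IsScalarTower ℂ A A] [SMulCommClass ℂ A A] [CompleteSpace A] (P : ProjTensorSquare A)
    (h : P.SymmPseudoAmenable) (z : A) (hz : z ≠ 0) (hzc : ∀ a : A, z * a = a * z) :
    ∃ (ι : Type u) (l : Filter ι) (f : ι → A →L[ℂ] ℂ), l.NeBot ∧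
      (∀ a b : A, Tendsto (fun i => f i (a * b - b * a)) l (𝓝 0)) ∧
      Tendsto (fun i => f i z) l (𝓝 1) := by
  obtain ⟨ι, l, t, hl, ht⟩ := h
  obtain ⟨φ, hφz⟩ := SeparatingDual.exists_eq_one (R := ℂ) hz
  refine ⟨ι, l, fun i => φ.comp (P.sandwich (t i)), hl, fun a b => ?_, ?_⟩
  · simpa [Function.comp_def] using
      (φ.continuous.tendsto 0).comp (ht.tendsto_sandwich_commutator a b)
  · simpa [Function.comp_def, hφz] using
      (φ.continuous.tendsto z).comp (ht.tendsto_sandwich_of_commute hzc)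
end

section
/- Let 𝔘 be a symmetrically pseudo-amenable Banach algebra and J a closed two-sided ideal of 𝔘. If J has an approximate identity {e_i} such that the multiplication operators a ↦ e_i a and a ↦ a e_i from 𝔘 into J are uniformly bounded, then J is symmetrically pseudo-amenable. -/
open Filter Topology

universe u

/-!
Let `(t_k)` be a symmetric approximate diagonal of `𝔘` and `(e_i)` the approximate identity of `J`.
The maps `θ_i (a ⊗ b) = ½ (e_i a ⊗ b e_i + a e_i ⊗ e_i b)` from `𝔘 ⊗̂ 𝔘` to `J ⊗̂ J` are bounded
by `M²` uniformly in `i` and commute with the flip. For fixed `x ∈ J` they intertwine the module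
actions of `x` up to errors involving only `x e_i - e_i x`, and `π (θ_i s) x → π s x`. These
limits are checked on elementary tensors: a uniformly bounded family of operators that converges
on elementary tensors converges everywhere. Hence `θ_i (t_k)`, with `k` tending to infinity first
and `i` second, is a symmetric approximate diagonal of `J`.
-/

theorem Filter.tendsto_curry_of_norm_sub_le {κ ι E : Type*} [SeminormedAddCommGroup E]
    {m : Filter κ} {l : Filter ι} {f : κ × ι → E} {y : E} {a : κ → ℝ} {b : κ → ι → ℝ}
    (ha : Tendsto a m (𝓝 0)) (hb : ∀ k, Tendsto (b k) l (𝓝 0))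
    (hf : ∀ k i, ‖f (k, i) - y‖ ≤ a k + b k i) : Tendsto f (m.curry l) (𝓝 y) := by
  refine Metric.tendsto_nhds.2 fun ε hε => eventually_curry_iff.2 ?_
  filter_upwards [ha.eventually_lt_const (half_pos hε)] with k hk
  filter_upwards [(hb k).eventually_lt_const (half_pos hε)] with i hi
  rw [dist_eq_norm]
  linarith [hf k i]

instance Filter.curry_neBot {α β : Type*} {l : Filter α} {m : Filter β} [l.NeBot] [m.NeBot] :
    (l.curry m).NeBot :=
  (frequently_true_iff_neBot _).mp <| (frequently_curry_iff _).mpr <|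
    Frequently.of_forall fun _ => (frequently_true_iff_neBot m).mpr ‹_›

theorem Filter.Tendsto.inv_two_smul_add {ι E : Type*} [NormedAddCommGroup E] [NormedSpace ℂ E]
    {l : Filter ι} {u v : ι → E} {y : E} (hu : Tendsto u l (𝓝 y)) (hv : Tendsto v l (𝓝 y)) :
    Tendsto (fun i => (2 : ℂ)⁻¹ • (u i + v i)) l (𝓝 y) := by
  simpa [← two_smul ℂ y, smul_smul] using (hu.add hv).const_smul (2 : ℂ)⁻¹

theorem tendsto_mul_of_forall_norm_mul_le {R ι : Type*} [NonUnitalSeminormedRing R]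
    {l : Filter ι} {e : ι → R} {M : ℝ} (hM : ∀ i a, ‖e i * a‖ ≤ M * ‖a‖) {z : R}
    (hz : Tendsto (fun i => e i * z) l (𝓝 z)) {w : ι → R} (hw : Tendsto w l (𝓝 z)) :
    Tendsto (fun i => e i * w i) l (𝓝 z) := by
  have hsmall : Tendsto (fun i => e i * (w i - z)) l (𝓝 0) :=
    squeeze_zero_norm (fun i => hM i _)
      (by simpa using (tendsto_iff_norm_sub_tendsto_zero.1 hw).const_mul M)
  simpa [mul_sub] using hsmall.add hz

namespace ProjTensorSquare

variable {A : Type u} [NonUnitalNormedRing A] [NormedSpace ℂ A]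
    [IsScalarTower ℂ A A] [SMulCommClass ℂ A A] [CompleteSpace A] (P : ProjTensorSquare A)

theorem mem_of_isClosed_of_tmul_mem {S : Submodule ℂ P.T} (hS : IsClosed (S : Set P.T))
    (h : ∀ a b, P.tmul a b ∈ S) (t : P.T) : t ∈ S := by
  obtain ⟨u, v, -, ht, -⟩ := P.exists_rep t 1 one_pos
  exact hS.mem_of_tendsto ht (Eventually.of_forall fun F => S.sum_mem fun n _ => h _ _)

theorem continuousLinearMap_ext {X : Type*} [NormedAddCommGroup X] [NormedSpace ℂ X]
    {g h : P.T →L[ℂ] X} (H : ∀ a b, g (P.tmul a b) = h (P.tmul a b)) : g = h := by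
  ext t
  simpa [sub_eq_zero] using
    P.mem_of_isClosed_of_tmul_mem (g - h).isClosed_ker (fun a b => by simp [H]) t

theorem tendsto_apply_of_tendsto_tmul {X : Type*} [NormedAddCommGroup X] [NormedSpace ℂ X]
    {ι : Type*} {l : Filter ι} {G : ι → P.T →L[ℂ] X} {G₀ : P.T →L[ℂ] X} {C : ℝ}
    (hG : ∀ i, ‖G i‖ ≤ C)
    (h : ∀ a b, Tendsto (fun i => G i (P.tmul a b)) l (𝓝 (G₀ (P.tmul a b)))) (t : P.T) :
    Tendsto (fun i => G i t) l (𝓝 (G₀ t)) := by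
  have hequi : Equicontinuous ((↑) ∘ G : ι → P.T → X) :=
    ((NormedSpace.equicontinuous_TFAE G).out 5 1).mp (show ∃ C, ∀ i, ‖G i‖ ≤ C from ⟨C, hG⟩)
  let S : Submodule ℂ P.T :=
    { carrier := {t | Tendsto (fun i => G i t) l (𝓝 (G₀ t))}
      add_mem' := fun hs ht => by simpa using hs.add ht
      zero_mem' := by simpa using tendsto_const_nhds
      smul_mem' := fun c _ ht => by simpa using ht.const_smul c }
  exact P.mem_of_isClosed_of_tmul_mem (S := S) (hequi.isClosed_setOfPred_tendsto G₀.continuous) h t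

theorem tendsto_tmul_zero_left {ι : Type*} {l : Filter ι} {u v : ι → A} {C : ℝ}
    (hu : Tendsto u l (𝓝 0)) (hv : ∀ i, ‖v i‖ ≤ C) :
    Tendsto (fun i => P.tmul (u i) (v i)) l (𝓝 0) :=
  squeeze_zero_norm
    (fun i => (P.norm_tmul_le _ _).trans (mul_le_mul_of_nonneg_left (hv i) (norm_nonneg _)))
    (by simpa using hu.norm.mul_const C)

theorem tendsto_tmul_zero_right {ι : Type*} {l : Filter ι} {u v : ι → A} {C : ℝ}
    (hu : ∀ i, ‖u i‖ ≤ C) (hv : Tendsto v l (𝓝 0)) :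
    Tendsto (fun i => P.tmul (u i) (v i)) l (𝓝 0) :=
  squeeze_zero_norm
    (fun i => (P.norm_tmul_le _ _).trans (mul_le_mul_of_nonneg_right (hu i) (norm_nonneg _)))
    (by simpa using hv.norm.const_mul C)

variable {B : Type u} [NonUnitalNormedRing B] [NormedSpace ℂ B]
    [IsScalarTower ℂ B B] [SMulCommClass ℂ B B] [CompleteSpace B] (Q : ProjTensorSquare B)

noncomputable def map (L R : A →L[ℂ] B) : P.T →L[ℂ] Q.T :=
  (P.lift (Q.tmul.bilinearComp L R)).choose

@[simp]
theorem map_tmul (L R : A →L[ℂ] B) (a b : A) : P.map Q L R (P.tmul a b) = Q.tmul (L a) (R b) :=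
  (P.lift (Q.tmul.bilinearComp L R)).choose_spec.1 a b

theorem norm_map_le (L R : A →L[ℂ] B) : ‖P.map Q L R‖ ≤ ‖L‖ * ‖R‖ :=
  (P.lift (Q.tmul.bilinearComp L R)).choose_spec.2.trans <|
    ContinuousLinearMap.opNorm_le_bound₂ _ (by positivity) fun a b =>
      calc ‖Q.tmul (L a) (R b)‖ ≤ ‖L a‖ * ‖R b‖ := Q.norm_tmul_le _ _
        _ ≤ (‖L‖ * ‖a‖) * (‖R‖ * ‖b‖) := by gcongr <;> exact ContinuousLinearMap.le_opNorm _ _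
        _ = ‖L‖ * ‖R‖ * ‖a‖ * ‖b‖ := by ring

noncomputable def symmMap (L R : A →L[ℂ] B) : P.T →L[ℂ] Q.T :=
  (2 : ℂ)⁻¹ • (P.map Q L R + P.map Q R L)

theorem symmMap_tmul (L R : A →L[ℂ] B) (a b : A) :
    P.symmMap Q L R (P.tmul a b) = (2 : ℂ)⁻¹ • (Q.tmul (L a) (R b) + Q.tmul (R a) (L b)) := by
  simp [symmMap]

theorem norm_symmMap_le (L R : A →L[ℂ] B) : ‖P.symmMap Q L R‖ ≤ ‖L‖ * ‖R‖ :=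
  calc ‖P.symmMap Q L R‖ ≤ ‖(2 : ℂ)⁻¹‖ * ‖P.map Q L R + P.map Q R L‖ := by
        rw [symmMap, norm_smul]
    _ ≤ 2⁻¹ * (‖L‖ * ‖R‖ + ‖R‖ * ‖L‖) := by
        rw [norm_inv, Complex.norm_two]
        gcongr
        exact (norm_add_le _ _).trans (add_le_add (P.norm_map_le Q L R) (P.norm_map_le Q R L))
    _ = ‖L‖ * ‖R‖ := by ring

theorem flip_symmMap (L R : A →L[ℂ] B) (t : P.T) :
    Q.flip (P.symmMap Q L R t) = P.symmMap Q L R (P.flip t) := by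
  refine congrArg (· t) (P.continuousLinearMap_ext (g := Q.flip.comp (P.symmMap Q L R))
    (h := (P.symmMap Q L R).comp P.flip) fun a b => ?_)
  simp [symmMap_tmul, flip_tmul, add_comm]

end ProjTensorSquare

namespace NonUnitalSubalgebra

-- Instance search cannot find `SubmoduleClass.toNormedSpace` itself: its scalar ring `R` is not
-- determined by the goal.
instance normedSpace {𝕜 A : Type*} [NormedField 𝕜] [NonUnitalSeminormedRing A] [NormedSpace 𝕜 A]
    (J : NonUnitalSubalgebra 𝕜 A) : NormedSpace 𝕜 J :=
  SubmoduleClass.toNormedSpace J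

variable {A : Type u} [NonUnitalNormedRing A] [NormedSpace ℂ A] (J : NonUnitalSubalgebra ℂ A)

def mulLeftCodRestrict [SMulCommClass ℂ A A] (hJ : ∀ a x : A, x ∈ J → x * a ∈ J) (e : J) :
    A →L[ℂ] J :=
  LinearMap.mkContinuous
    { toFun := fun a => ⟨e * a, hJ a _ e.2⟩
      map_add' := fun _ _ => Subtype.ext (mul_add _ _ _)
      map_smul' := fun c _ => Subtype.ext (mul_smul_comm c _ _) }
    ‖(e : A)‖ fun a => norm_mul_le (e : A) a

@[simp]
theorem coe_mulLeftCodRestrict [SMulCommClass ℂ A A] (hJ : ∀ a x : A, x ∈ J → x * a ∈ J)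
    (e : J) (a : A) : (J.mulLeftCodRestrict hJ e a : A) = e * a :=
  rfl

def mulRightCodRestrict [IsScalarTower ℂ A A] (hJ : ∀ a x : A, x ∈ J → a * x ∈ J) (e : J) :
    A →L[ℂ] J :=
  LinearMap.mkContinuous
    { toFun := fun a => ⟨a * e, hJ a _ e.2⟩
      map_add' := fun _ _ => Subtype.ext (add_mul _ _ _)
      map_smul' := fun c _ => Subtype.ext (smul_mul_assoc c _ _) }
    ‖(e : A)‖ fun a => (norm_mul_le a (e : A)).trans_eq (mul_comm _ _)

@[simp]
theorem coe_mulRightCodRestrict [IsScalarTower ℂ A A] (hJ : ∀ a x : A, x ∈ J → a * x ∈ J)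
    (e : J) (a : A) : (J.mulRightCodRestrict hJ e a : A) = a * e :=
  rfl

def IsBoundedMulApproxUnit {ι : Type*} (l : Filter ι) (e : ι → J) (M : ℝ) : Prop :=
  (∀ x : J, Tendsto (fun i => e i * x) l (𝓝 x) ∧ Tendsto (fun i => x * e i) l (𝓝 x)) ∧
    ∀ i (a : A), ‖(e i : A) * a‖ ≤ M * ‖a‖ ∧ ‖a * (e i : A)‖ ≤ M * ‖a‖

variable {J}

theorem IsBoundedMulApproxUnit.tendsto_mul_left {ι : Type*} {l : Filter ι} {e : ι → J} {M : ℝ}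
    (he : J.IsBoundedMulApproxUnit l e M) {z : A} (hz : z ∈ J) :
    Tendsto (fun i => (e i : A) * z) l (𝓝 z) :=
  (continuous_subtype_val.tendsto _).comp (he.1 ⟨z, hz⟩).1

theorem IsBoundedMulApproxUnit.tendsto_mul_right {ι : Type*} {l : Filter ι} {e : ι → J} {M : ℝ}
    (he : J.IsBoundedMulApproxUnit l e M) {z : A} (hz : z ∈ J) :
    Tendsto (fun i => z * (e i : A)) l (𝓝 z) :=
  (continuous_subtype_val.tendsto _).comp (he.1 ⟨z, hz⟩).2

end NonUnitalSubalgebra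

namespace ProjTensorSquare

variable {A : Type u} [NonUnitalNormedRing A] [NormedSpace ℂ A]
    [IsScalarTower ℂ A A] [SMulCommClass ℂ A A] [CompleteSpace A] (P : ProjTensorSquare A)
    {J : NonUnitalSubalgebra ℂ A} (hJl : ∀ a x : A, x ∈ J → a * x ∈ J)
    (hJr : ∀ a x : A, x ∈ J → x * a ∈ J) [CompleteSpace J] (PJ : ProjTensorSquare J)

/-- `a ⊗ b ↦ ½ (e a ⊗ b e + a e ⊗ e b)`: the first summand alone would not commute with the flip. -/
noncomputable def compressMap (e : J) : P.T →L[ℂ] PJ.T :=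
  P.symmMap PJ (J.mulLeftCodRestrict hJr e) (J.mulRightCodRestrict hJl e)

theorem norm_compressMap_le {e : J} {M : ℝ} (hM : 0 ≤ M)
    (he : ∀ a : A, ‖(e : A) * a‖ ≤ M * ‖a‖ ∧ ‖a * (e : A)‖ ≤ M * ‖a‖) :
    ‖P.compressMap hJl hJr PJ e‖ ≤ M * M :=
  (P.norm_symmMap_le PJ _ _).trans <| mul_le_mul
    (ContinuousLinearMap.opNorm_le_bound _ hM fun a => (he a).1)
    (ContinuousLinearMap.opNorm_le_bound _ hM fun a => (he a).2) (norm_nonneg _) hM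

section

variable {ι : Type*} {l : Filter ι} {e : ι → J} {M : ℝ}

theorem tendsto_π_compressMap_mul
    (he : J.IsBoundedMulApproxUnit l e M) (hM : 0 ≤ M) (x : J) (s : P.T) :
    Tendsto (fun i => (PJ.π (P.compressMap hJl hJr PJ (e i) s) : A) * x) l (𝓝 (P.π s * x)) := by
  have hmul : ∀ z ∈ J, ∀ w : ι → A, Tendsto w l (𝓝 z) →
      Tendsto (fun i => (e i : A) * w i) l (𝓝 z) := fun z hz _ =>
    tendsto_mul_of_forall_norm_mul_le (fun i a => (he.2 i a).1) (he.tendsto_mul_left hz)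
  let mulX := (ContinuousLinearMap.mul ℂ A).flip (x : A)
  refine P.tendsto_apply_of_tendsto_tmul (G₀ := mulX.comp P.π)
    (G := fun i =>
      mulX.comp (J.toSubmodule.subtypeL.comp (PJ.π.comp (P.compressMap hJl hJr PJ (e i)))))
    (C := ‖mulX‖ * (‖J.toSubmodule.subtypeL‖ * (‖PJ.π‖ * (M * M)))) (fun i => ?_) (fun a b => ?_) s
  · refine (ContinuousLinearMap.opNorm_comp_le _ _).trans ?_
    gcongr
    refine (ContinuousLinearMap.opNorm_comp_le _ _).trans ?_
    gcongr
    refine (ContinuousLinearMap.opNorm_comp_le _ _).trans ?_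
    gcongr
    exact P.norm_compressMap_le hJl hJr PJ hM (he.2 i)
  · have h1 : Tendsto (fun i => (e i : A) * (a * (b * (e i * x)))) l (𝓝 (a * (b * x))) :=
      hmul _ (hJl _ _ (hJl _ _ x.2)) _ (((he.tendsto_mul_left x.2).const_mul b).const_mul a)
    have h2 : Tendsto (fun i => a * ((e i : A) * ((e i : A) * (b * x)))) l (𝓝 (a * (b * x))) :=
      (hmul _ (hJl _ _ x.2) _ (he.tendsto_mul_left (hJl _ _ x.2))).const_mul a
    simpa [mulX, compressMap, symmMap_tmul, π_tmul, smul_mul_assoc, add_mul, mul_assoc] using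
      h1.inv_two_smul_add h2

theorem tendsto_lmul_compressMap_sub
    (he : J.IsBoundedMulApproxUnit l e M) (hM : 0 ≤ M) (x : J) (s : P.T) :
    Tendsto (fun i => PJ.lmul x (P.compressMap hJl hJr PJ (e i) s)
      - P.compressMap hJl hJr PJ (e i) (P.lmul x s)) l (𝓝 0) := by
  set Φ := fun i => P.compressMap hJl hJr PJ (e i)
  suffices h : Tendsto (fun i => ((PJ.lmul x).comp (Φ i) - (Φ i).comp (P.lmul x)) s) l
      (𝓝 ((0 : P.T →L[ℂ] PJ.T) s)) by simpa using h
  refine P.tendsto_apply_of_tendsto_tmul (G₀ := 0)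
    (G := fun i => (PJ.lmul x).comp (Φ i) - (Φ i).comp (P.lmul x))
    (C := ‖PJ.lmul x‖ * (M * M) + M * M * ‖P.lmul x‖) (fun i => ?_) (fun a b => ?_) s
  · have hΦ : ‖Φ i‖ ≤ M * M := P.norm_compressMap_le hJl hJr PJ hM (he.2 i)
    refine (norm_sub_le _ _).trans (add_le_add ?_ ?_) <;>
      refine (ContinuousLinearMap.opNorm_comp_le _ _).trans ?_ <;> gcongr
  · have hcomm : ∀ i, x * J.mulRightCodRestrict hJl (e i) a
        = J.mulRightCodRestrict hJl (e i) (x * a) := fun i => Subtype.ext (mul_assoc _ _ _).symm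
    have hdefect : Tendsto (fun i => x * J.mulLeftCodRestrict hJr (e i) a
        - J.mulLeftCodRestrict hJr (e i) (x * a)) l (𝓝 0) := by
      rw [tendsto_subtype_rng]
      have hx : Tendsto (fun i => (x : A) * (e i) * a) l (𝓝 (x * a)) :=
        (he.tendsto_mul_right x.2).mul_const a
      have hxa : Tendsto (fun i => (e i : A) * (x * a)) l (𝓝 (x * a)) :=
        he.tendsto_mul_left (hJr a _ x.2)
      simpa [mul_assoc] using hx.sub hxa
    simpa [Φ, compressMap, symmMap_tmul, lmul_tmul, hcomm, map_sub, smul_sub] using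
      (PJ.tendsto_tmul_zero_left (v := fun i => J.mulRightCodRestrict hJl (e i) b) hdefect
        fun i => (he.2 i b).2).const_smul (2 : ℂ)⁻¹

theorem tendsto_rmul_compressMap_sub
    (he : J.IsBoundedMulApproxUnit l e M) (hM : 0 ≤ M) (x : J) (s : P.T) :
    Tendsto (fun i => PJ.rmul x (P.compressMap hJl hJr PJ (e i) s)
      - P.compressMap hJl hJr PJ (e i) (P.rmul x s)) l (𝓝 0) := by
  set Φ := fun i => P.compressMap hJl hJr PJ (e i)
  suffices h : Tendsto (fun i => ((PJ.rmul x).comp (Φ i) - (Φ i).comp (P.rmul x)) s) l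
      (𝓝 ((0 : P.T →L[ℂ] PJ.T) s)) by simpa using h
  refine P.tendsto_apply_of_tendsto_tmul (G₀ := 0)
    (G := fun i => (PJ.rmul x).comp (Φ i) - (Φ i).comp (P.rmul x))
    (C := ‖PJ.rmul x‖ * (M * M) + M * M * ‖P.rmul x‖) (fun i => ?_) (fun a b => ?_) s
  · have hΦ : ‖Φ i‖ ≤ M * M := P.norm_compressMap_le hJl hJr PJ hM (he.2 i)
    refine (norm_sub_le _ _).trans (add_le_add ?_ ?_) <;>
      refine (ContinuousLinearMap.opNorm_comp_le _ _).trans ?_ <;> gcongr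
  · have hcomm : ∀ i, J.mulLeftCodRestrict hJr (e i) b * x
        = J.mulLeftCodRestrict hJr (e i) (b * x) := fun i => Subtype.ext (mul_assoc _ _ _)
    have hdefect : Tendsto (fun i => J.mulRightCodRestrict hJl (e i) b * x
        - J.mulRightCodRestrict hJl (e i) (b * x)) l (𝓝 0) := by
      rw [tendsto_subtype_rng]
      have hx : Tendsto (fun i => b * ((e i : A) * x)) l (𝓝 (b * x)) :=
        (he.tendsto_mul_left x.2).const_mul b
      have hbx : Tendsto (fun i => b * x * (e i : A)) l (𝓝 (b * x)) :=
        he.tendsto_mul_right (hJl b _ x.2)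
      simpa [mul_assoc] using hx.sub hbx
    simpa [Φ, compressMap, symmMap_tmul, rmul_tmul, hcomm, map_sub, smul_sub] using
      (PJ.tendsto_tmul_zero_right (u := fun i => J.mulLeftCodRestrict hJr (e i) a)
        (fun i => (he.2 i a).1) hdefect).const_smul (2 : ℂ)⁻¹

end

theorem isSymmApproxDiagonal_compressMap {ι κ : Type u} {l : Filter ι} {m : Filter κ} {e : ι → J}
    {M : ℝ} {t : κ → P.T} (ht : P.IsSymmApproxDiagonal m t)
    (he : J.IsBoundedMulApproxUnit l e M) (hM : 0 ≤ M) :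
    PJ.IsSymmApproxDiagonal (m.curry l) fun p => P.compressMap hJl hJr PJ (e p.2) (t p.1) := by
  obtain ⟨hflip, hcomm, hπ⟩ := ht
  refine ⟨fun p => (P.flip_symmMap PJ _ _ _).trans (congrArg _ (hflip p.1)), fun x => ?_,
    fun x => ?_⟩
  · let Φ i := P.compressMap hJl hJr PJ (e i)
    let defect k i := (PJ.lmul x (Φ i (t k)) - Φ i (P.lmul x (t k)))
      - (PJ.rmul x (Φ i (t k)) - Φ i (P.rmul x (t k)))
    refine tendsto_curry_of_norm_sub_le (a := fun k => M * M * ‖P.lmul x (t k) - P.rmul x (t k)‖)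
      (b := fun k i => ‖defect k i‖) ?_ (fun k => ?_) (fun k i => ?_)
    · simpa using (hcomm x).norm.const_mul (M * M)
    · simpa using ((P.tendsto_lmul_compressMap_sub hJl hJr PJ he hM x (t k)).sub
        (P.tendsto_rmul_compressMap_sub hJl hJr PJ he hM x (t k))).norm
    · have hsplit : PJ.lmul x (Φ i (t k)) - PJ.rmul x (Φ i (t k))
          = Φ i (P.lmul x (t k) - P.rmul x (t k)) + defect k i := by
        simp only [defect, map_sub]; abel
      rw [sub_zero]
      exact hsplit ▸ (norm_add_le _ _).trans (add_le_add_left ((Φ i).le_of_opNorm_le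
        (P.norm_compressMap_le hJl hJr PJ hM (he.2 i)) _) _)
  · rw [tendsto_subtype_rng]
    refine tendsto_curry_of_norm_sub_le (a := fun k => ‖P.π (t k) * x - x‖)
      (b := fun k i => ‖(PJ.π (P.compressMap hJl hJr PJ (e i) (t k)) : A) * x - P.π (t k) * x‖)
      ?_ (fun k => ?_) (fun k i => ?_)
    · simpa using ((hπ x).sub_const (x : A)).norm
    · simpa using ((P.tendsto_π_compressMap_mul hJl hJr PJ he hM x (t k)).sub_const
        (P.π (t k) * x)).norm
    · simpa [add_comm] using norm_sub_le_norm_sub_add_norm_sub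
        ((PJ.π (P.compressMap hJl hJr PJ (e i) (t k)) : A) * x) (P.π (t k) * x) (x : A)

end ProjTensorSquare

/-- Let `𝔘` be a symmetrically pseudo-amenable Banach algebra and `J` a closed
two-sided ideal of `𝔘`.  If `J` has an approximate identity `{e_i}` such that the multiplication
operators `a ↦ e_i a` and `a ↦ a e_i` from `𝔘` into `J` are uniformly bounded, then `J` is
symmetrically pseudo-amenable. -/
theorem symmPseudoAmenable_ideal {A : Type u} [NonUnitalNormedRing A] [NormedSpace ℂ A]
    [IsScalarTower ℂ A A] [SMulCommClass ℂ A A] [CompleteSpace A]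
    (P : ProjTensorSquare A) (h : P.SymmPseudoAmenable)
    (J : NonUnitalSubalgebra ℂ A)
    (hJl : ∀ a x : A, x ∈ J → a * x ∈ J) (hJr : ∀ a x : A, x ∈ J → x * a ∈ J)
    (hJc : IsClosed (J : Set A))
    {ι : Type u} (l : Filter ι) [l.NeBot] (e : ι → J)
    (happrox : ∀ x : J, Tendsto (fun i => e i * x) l (𝓝 x) ∧
      Tendsto (fun i => x * e i) l (𝓝 x))
    (hbdd : ∃ M : ℝ, 1 ≤ M ∧ ∀ (i : ι) (a : A),
      ‖(e i : A) * a‖ ≤ M * ‖a‖ ∧ ‖a * (e i : A)‖ ≤ M * ‖a‖)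
    (PJ : @ProjTensorSquare J _ (SubmoduleClass.toNormedSpace J) _ _ hJc.completeSpace_coe) :
    @ProjTensorSquare.SymmPseudoAmenable J _ (SubmoduleClass.toNormedSpace J) _ _ hJc.completeSpace_coe PJ := by
  have : CompleteSpace J := hJc.completeSpace_coe
  obtain ⟨M, hM1, hMb⟩ := hbdd
  obtain ⟨κ, m, t, hm, ht⟩ := h
  exact ⟨κ × ι, m.curry l, _, inferInstance,
    P.isSymmApproxDiagonal_compressMap hJl hJr PJ ht ⟨happrox, hMb⟩
      (zero_le_one.trans hM1)⟩
end

section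
/- The Banach algebra M_ℕ(ℂ) of ℕ×ℕ complex matrices with finite ℓ¹-norm of entries is symmetrically pseudo-amenable; specifically t_n = (1/n) Σ_{i,j=1}^n E_{ij} ⊗ E_{ji} forms a symmetric approximate diagonal. -/
open Filter Topology

universe u

set_option linter.unusedSectionVars false
set_option maxHeartbeats 1000000

section AuxMatrix

variable {M : Type} [NonUnitalNormedRing M] [NormedSpace ℂ M]
    [IsScalarTower ℂ M M] [SMulCommClass ℂ M M] [CompleteSpace M]

local instance : Fact ((1 : ENNReal) ≤ 1) := ⟨le_refl _⟩

lemma aux_coord_summable (e : M ≃ₗᵢ[ℂ] lp (fun _ : ℕ × ℕ => ℂ) 1) (A : M) :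
    Summable fun q : ℕ × ℕ => ‖(e A : ∀ _ : ℕ × ℕ, ℂ) q‖ := by
  have h := lp.hasSum_norm (p := 1) (E := fun _ : ℕ × ℕ => ℂ) (by norm_num) (e A)
  simpa using h.summable

lemma aux_hasSum (e : M ≃ₗᵢ[ℂ] lp (fun _ : ℕ × ℕ => ℂ) 1) (A : M) :
    HasSum (fun q : ℕ × ℕ => (e A : ∀ _ : ℕ × ℕ, ℂ) q • e.symm (lp.single 1 q 1)) A := by
  have h := lp.hasSum_single (E := fun _ : ℕ × ℕ => ℂ) (p := 1) (by norm_num) (e A)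
  have h2 := (e.symm.toContinuousLinearEquiv.toContinuousLinearMap).hasSum h
  have h3 : ∀ q : ℕ × ℕ, lp.single (E := fun _ : ℕ × ℕ => ℂ) 1 q ((e A : ∀ _ : ℕ × ℕ, ℂ) q)
      = (e A : ∀ _ : ℕ × ℕ, ℂ) q • lp.single 1 q (1 : ℂ) := by
    intro q
    rw [← lp.single_smul]
    norm_num
  simpa [h3] using h2

lemma aux_apply (e : M ≃ₗᵢ[ℂ] lp (fun _ : ℕ × ℕ => ℂ) 1)
    (E : ℕ → ℕ → M) (hE : ∀ i j, E i j = e.symm (lp.single 1 (i, j) (1 : ℂ)))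
    (i j : ℕ) (q : ℕ × ℕ) :
    (e (E i j) : ∀ _ : ℕ × ℕ, ℂ) q = if q = (i, j) then 1 else 0 := by
  rw [hE, e.apply_symm_apply]
  by_cases h : q = (i, j)
  · subst h; simpa using lp.single_apply_self (E := fun _ : ℕ × ℕ => ℂ) 1 (i, j) (1 : ℂ)
  · rw [lp.single_apply_ne (E := fun _ : ℕ × ℕ => ℂ) 1 _ _ h]; simp [h]

lemma aux_norm (e : M ≃ₗᵢ[ℂ] lp (fun _ : ℕ × ℕ => ℂ) 1)
    (E : ℕ → ℕ → M) (hE : ∀ i j, E i j = e.symm (lp.single 1 (i, j) (1 : ℂ)))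
    (i j : ℕ) : ‖E i j‖ = 1 := by
  rw [hE, e.symm.norm_map]
  simpa using lp.norm_single (E := fun _ : ℕ × ℕ => ℂ) (p := 1) (by norm_num)
    (fun _ => (1 : ℂ)) (i, j)

lemma aux_mul (e : M ≃ₗᵢ[ℂ] lp (fun _ : ℕ × ℕ => ℂ) 1)
    (hmul : ∀ A B : M, ∀ q : ℕ × ℕ,
      (e (A * B) : ∀ _ : ℕ × ℕ, ℂ) q = ∑' j : ℕ, (e A : ∀ _ : ℕ × ℕ, ℂ) (q.1, j) *
        (e B : ∀ _ : ℕ × ℕ, ℂ) (j, q.2))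
    (E : ℕ → ℕ → M) (hE : ∀ i j, E i j = e.symm (lp.single 1 (i, j) (1 : ℂ)))
    (i j k l : ℕ) : E i j * E k l = if j = k then E i l else 0 := by
  apply e.injective
  apply lp.ext
  funext q
  have lhs : (e (E i j * E k l) : ∀ _ : ℕ × ℕ, ℂ) q =
      (if (q.1, j) = (i, j) then (1:ℂ) else 0) * (if (j, q.2) = (k, l) then 1 else 0) := by
    rw [hmul]
    simp only [aux_apply e E hE]
    refine tsum_eq_single j ?_
    intro m hm
    rw [if_neg, zero_mul]
    simp [Prod.ext_iff]
    intro _; exact hm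
  rw [lhs]
  have rhs : (e (if j = k then E i l else 0) : ∀ _ : ℕ × ℕ, ℂ) q =
      if j = k then (if q = (i, l) then (1:ℂ) else 0) else 0 := by
    by_cases h : j = k
    · rw [if_pos h, if_pos h]; exact aux_apply e E hE i l q
    · rw [if_neg h, if_neg h, map_zero]
      exact (congrFun (lp.coeFn_zero (fun _ : ℕ × ℕ => ℂ) 1) q)
  rw [rhs]
  clear lhs rhs
  simp only [Prod.mk.injEq]
  by_cases h1 : j = k <;> by_cases h2 : q.1 = i <;> by_cases h3 : q.2 = l <;>
    simp [h1, h2, h3, Prod.ext_iff]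

lemma aux_key {X : Type} [NormedAddCommGroup X] [NormedSpace ℂ X]
    (e : M ≃ₗᵢ[ℂ] lp (fun _ : ℕ × ℕ => ℂ) 1)
    (E : ℕ → ℕ → M) (hE : ∀ i j, E i j = e.symm (lp.single 1 (i, j) (1 : ℂ)))
    (Φ : M →L[ℂ] X) (s : Finset (ℕ × ℕ))
    (h0 : ∀ q ∈ s, Φ (E q.1 q.2) = 0)
    (hb : ∀ q : ℕ × ℕ, ‖Φ (E q.1 q.2)‖ ≤ 2) (A : M) :
    ‖Φ A‖ ≤ 2 * ∑' (q : {q : ℕ × ℕ // q ∉ s}), ‖(e A : ∀ _ : ℕ × ℕ, ℂ) q.1‖ := by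
  set a : ℕ × ℕ → ℂ := fun q => (e A : ∀ _ : ℕ × ℕ, ℂ) q with ha
  have hS : HasSum (fun q : ℕ × ℕ => a q • Φ (E q.1 q.2)) (Φ A) := by
    have h2 := Φ.hasSum (aux_hasSum e A)
    simp only [map_smul] at h2
    simpa only [← hE] using h2
  have hsub : Function.support (fun q : ℕ × ℕ => a q • Φ (E q.1 q.2)) ⊆ {q | q ∉ s} := by
    intro q hq
    simp only [Function.mem_support, ne_eq] at hq
    intro hqs
    exact hq (by rw [h0 q hqs, smul_zero])
  have hS' : HasSum ((fun q : ℕ × ℕ => a q • Φ (E q.1 q.2)) ∘ Subtype.val :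
      {q : ℕ × ℕ // q ∉ s} → X) (Φ A) :=
    (hasSum_subtype_iff_of_support_subset hsub).2 hS
  have hsumm : Summable fun q : {q : ℕ × ℕ // q ∉ s} => ‖a q.1‖ :=
    (aux_coord_summable e A).subtype _
  have hnorm : Summable fun q : {q : ℕ × ℕ // q ∉ s} => ‖a q.1 • Φ (E q.1.1 q.1.2)‖ := by
    refine Summable.of_nonneg_of_le (fun _ => norm_nonneg _) (fun q => ?_) (hsumm.mul_right 2)
    rw [norm_smul]
    exact mul_le_mul_of_nonneg_left (hb q.1) (norm_nonneg _)
  calc ‖Φ A‖ = ‖∑' q : {q : ℕ × ℕ // q ∉ s}, a q.1 • Φ (E q.1.1 q.1.2)‖ := by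
        exact congrArg norm hS'.tsum_eq.symm
    _ ≤ ∑' q : {q : ℕ × ℕ // q ∉ s}, ‖a q.1 • Φ (E q.1.1 q.1.2)‖ := norm_tsum_le_tsum_norm hnorm
    _ ≤ ∑' q : {q : ℕ × ℕ // q ∉ s}, 2 * ‖a q.1‖ := by
        refine Summable.tsum_le_tsum (fun q => ?_) hnorm (hsumm.mul_left 2)
        rw [norm_smul, mul_comm]
        exact mul_le_mul_of_nonneg_right (hb q.1) (norm_nonneg _)
    _ = 2 * ∑' q : {q : ℕ × ℕ // q ∉ s}, ‖a q.1‖ := tsum_mul_left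

lemma aux_tail_tendsto (e : M ≃ₗᵢ[ℂ] lp (fun _ : ℕ × ℕ => ℂ) 1) (A : M) :
    Tendsto (fun n : ℕ => 2 * ∑' (q : {q : ℕ × ℕ //
      q ∉ Finset.range n ×ˢ Finset.range n}), ‖(e A : ∀ _ : ℕ × ℕ, ℂ) q.1‖) atTop (𝓝 0) := by
  have h1 : Tendsto (fun n : ℕ => Finset.range n ×ˢ Finset.range n) atTop atTop := by
    apply tendsto_atTop_finset_of_monotone
    · intro m n hmn
      exact Finset.product_subset_product (Finset.range_subset_range.2 hmn) (Finset.range_subset_range.2 hmn)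
    · rintro ⟨i, j⟩
      exact ⟨max i j + 1, Finset.mem_product.2 ⟨Finset.mem_range.2 (by omega),
        Finset.mem_range.2 (by omega)⟩⟩
  have h2 := (tendsto_tsum_compl_atTop_zero
    (fun q : ℕ × ℕ => ‖(e A : ∀ _ : ℕ × ℕ, ℂ) q‖)).comp h1
  simpa using h2.const_mul 2

noncomputable def auxT (P : ProjTensorSquare M) (E : ℕ → ℕ → M) (n : ℕ) : P.T :=
  (n : ℂ)⁻¹ • ∑ i ∈ Finset.range n, ∑ j ∈ Finset.range n, P.tmul (E i j) (E j i)

noncomputable def auxΦ (P : ProjTensorSquare M) (E : ℕ → ℕ → M) (n : ℕ) : M →L[ℂ] P.T :=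
  (n : ℂ)⁻¹ • ∑ i ∈ Finset.range n, ∑ j ∈ Finset.range n,
    ((P.tmul.flip (E j i)).comp ((ContinuousLinearMap.mul ℂ M).flip (E i j)) -
     (P.tmul (E i j)).comp (ContinuousLinearMap.mul ℂ M (E j i)))

lemma auxΦ_apply (P : ProjTensorSquare M) (E : ℕ → ℕ → M) (n : ℕ) (A : M) :
    auxΦ P E n A = (n : ℂ)⁻¹ • ∑ i ∈ Finset.range n, ∑ j ∈ Finset.range n,
      (P.tmul (A * E i j) (E j i) - P.tmul (E i j) (E j i * A)) := by
  simp [auxΦ, ContinuousLinearMap.sum_apply, ContinuousLinearMap.smul_apply,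
    ContinuousLinearMap.sub_apply, ContinuousLinearMap.comp_apply,
    ContinuousLinearMap.flip_apply, ContinuousLinearMap.mul_apply']

lemma auxΦ_eq (P : ProjTensorSquare M) (E : ℕ → ℕ → M) (n : ℕ) (A : M) :
    auxΦ P E n A = P.lmul A (auxT P E n) - P.rmul A (auxT P E n) := by
  rw [auxΦ_apply, auxT]
  rw [map_smul, map_smul, ← smul_sub]
  congr 1
  rw [map_sum, map_sum, ← Finset.sum_sub_distrib]
  refine Finset.sum_congr rfl fun i _ => ?_
  rw [map_sum, map_sum, ← Finset.sum_sub_distrib]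
  refine Finset.sum_congr rfl fun j _ => ?_
  rw [P.lmul_tmul, P.rmul_tmul]

lemma auxΦ_unit (P : ProjTensorSquare M) (E : ℕ → ℕ → M)
    (hm : ∀ i j k l, E i j * E k l = if j = k then E i l else 0) (n k l : ℕ) :
    auxΦ P E n (E k l) = (n : ℂ)⁻¹ •
      ((if l ∈ Finset.range n then ∑ j ∈ Finset.range n, P.tmul (E k j) (E j l) else 0) -
       (if k ∈ Finset.range n then ∑ j ∈ Finset.range n, P.tmul (E k j) (E j l) else 0)) := by
  have hl : ∀ (c : Prop) [Decidable c] (x y : M),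
      P.tmul (if c then x else 0) y = if c then P.tmul x y else 0 := by
    intros c _ x y; split_ifs <;> simp
  have hr : ∀ (c : Prop) [Decidable c] (x y : M),
      P.tmul x (if c then y else 0) = if c then P.tmul x y else 0 := by
    intros c _ x y; split_ifs <;> simp
  have pull : ∀ (c : Prop) [Decidable c] (g : ℕ → P.T),
      (∑ j ∈ Finset.range n, if c then g j else 0) = if c then ∑ j ∈ Finset.range n, g j else 0 := by
    intros c _ g; split_ifs <;> simp
  rw [auxΦ_apply]
  congr 1
  calc ∑ i ∈ Finset.range n, ∑ j ∈ Finset.range n,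
        (P.tmul (E k l * E i j) (E j i) - P.tmul (E i j) (E j i * E k l))
      = ∑ i ∈ Finset.range n, ∑ j ∈ Finset.range n,
        ((if l = i then P.tmul (E k j) (E j i) else 0) -
         (if i = k then P.tmul (E i j) (E j l) else 0)) := by
        refine Finset.sum_congr rfl fun i _ => Finset.sum_congr rfl fun j _ => ?_
        rw [hm k l i j, hm j i k l, hl, hr]
    _ = _ := by
        simp only [Finset.sum_sub_distrib]
        congr 1
        · rw [Finset.sum_comm]
          rw [Finset.sum_congr rfl (fun j _ =>
            Finset.sum_ite_eq (Finset.range n) l (fun x => P.tmul (E k j) (E j x)))]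
          exact pull _ _
        · rw [Finset.sum_congr rfl (fun i _ => pull (i = k) (fun j => P.tmul (E i j) (E j l)))]
          exact Finset.sum_ite_eq' (Finset.range n) k
            (fun x => ∑ j ∈ Finset.range n, P.tmul (E x j) (E j l))

lemma auxΦ_unit_zero (P : ProjTensorSquare M) (E : ℕ → ℕ → M)
    (hm : ∀ i j k l, E i j * E k l = if j = k then E i l else 0) (n k l : ℕ)
    (hk : k < n) (hl : l < n) : auxΦ P E n (E k l) = 0 := by
  rw [auxΦ_unit P E hm, if_pos (Finset.mem_range.2 hl), if_pos (Finset.mem_range.2 hk),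
    sub_self, smul_zero]

lemma auxΦ_unit_norm (P : ProjTensorSquare M) (E : ℕ → ℕ → M)
    (hm : ∀ i j k l, E i j * E k l = if j = k then E i l else 0)
    (hn1 : ∀ i j, ‖E i j‖ = 1) (n k l : ℕ) : ‖auxΦ P E n (E k l)‖ ≤ 2 := by
  rcases Nat.eq_zero_or_pos n with h | h
  · subst h
    rw [auxΦ_unit P E hm]
    simp
  · rw [auxΦ_unit P E hm]
    have hSn : ‖∑ j ∈ Finset.range n, P.tmul (E k j) (E j l)‖ ≤ (n : ℝ) := by
      refine (norm_sum_le _ _).trans ?_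
      have hb : ∀ j, ‖P.tmul (E k j) (E j l)‖ ≤ 1 := fun j =>
        (P.norm_tmul_le _ _).trans (by rw [hn1, hn1]; norm_num)
      calc ∑ j ∈ Finset.range n, ‖P.tmul (E k j) (E j l)‖
          ≤ ∑ _j ∈ Finset.range n, (1 : ℝ) := Finset.sum_le_sum fun j _ => hb j
        _ = (n : ℝ) := by simp
    have h1 : ∀ (c : Prop) [Decidable c],
        ‖if c then ∑ j ∈ Finset.range n, P.tmul (E k j) (E j l) else 0‖ ≤ (n : ℝ) := by
      intro c _; split_ifs
      · exact hSn
      · simp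
    rw [norm_smul]
    have : ‖((n : ℂ))⁻¹‖ = (n : ℝ)⁻¹ := by
      rw [norm_inv, Complex.norm_natCast]
    rw [this]
    calc (n : ℝ)⁻¹ * ‖_ - _‖ ≤ (n : ℝ)⁻¹ * ((n : ℝ) + (n : ℝ)) := by
          refine mul_le_mul_of_nonneg_left ((norm_sub_le _ _).trans ?_) (by positivity)
          exact add_le_add (h1 _) (h1 _)
      _ = 2 := by
          field_simp
          ring
lemma aux_pi (P : ProjTensorSquare M) (E : ℕ → ℕ → M)
    (hm : ∀ i j k l, E i j * E k l = if j = k then E i l else 0) (n : ℕ) :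
    P.π (auxT P E n) = ∑ i ∈ Finset.range n, E i i := by
  rcases Nat.eq_zero_or_pos n with h | h
  · subst h; simp [auxT]
  · rw [auxT, map_smul]
    have : P.π (∑ i ∈ Finset.range n, ∑ j ∈ Finset.range n, P.tmul (E i j) (E j i))
        = ∑ i ∈ Finset.range n, ∑ _j ∈ Finset.range n, E i i := by
      rw [map_sum]
      refine Finset.sum_congr rfl fun i _ => ?_
      rw [map_sum]
      refine Finset.sum_congr rfl fun j _ => ?_
      rw [P.π_tmul, hm i j j i, if_pos rfl]
    rw [this]
    have : ∑ i ∈ Finset.range n, ∑ _j ∈ Finset.range n, E i i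
        = (n : ℂ) • ∑ i ∈ Finset.range n, E i i := by
      rw [Finset.smul_sum]
      refine Finset.sum_congr rfl fun i _ => ?_
      rw [Finset.sum_const, Finset.card_range, Nat.cast_smul_eq_nsmul]
    rw [this, smul_smul, inv_mul_cancel₀ (Nat.cast_ne_zero.2 h.ne'), one_smul]

noncomputable def auxΨ (E : ℕ → ℕ → M) (n : ℕ) : M →L[ℂ] M :=
  ContinuousLinearMap.mul ℂ M (∑ i ∈ Finset.range n, E i i) - ContinuousLinearMap.id ℂ M

lemma auxΨ_apply (E : ℕ → ℕ → M) (n : ℕ) (A : M) :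
    auxΨ E n A = (∑ i ∈ Finset.range n, E i i) * A - A := by
  simp [auxΨ, ContinuousLinearMap.mul_apply', Finset.sum_mul]

lemma auxΨ_unit (E : ℕ → ℕ → M)
    (hm : ∀ i j k l, E i j * E k l = if j = k then E i l else 0) (n k l : ℕ) :
    auxΨ E n (E k l) = (if k ∈ Finset.range n then E k l else 0) - E k l := by
  rw [auxΨ_apply, Finset.sum_mul]
  congr 1
  calc ∑ i ∈ Finset.range n, E i i * E k l
      = ∑ i ∈ Finset.range n, (if i = k then E i l else 0) :=
        Finset.sum_congr rfl fun i _ => hm i i k l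
    _ = if k ∈ Finset.range n then E k l else 0 :=
        Finset.sum_ite_eq' (Finset.range n) k (fun i => E i l)

lemma auxΨ_unit_zero (E : ℕ → ℕ → M)
    (hm : ∀ i j k l, E i j * E k l = if j = k then E i l else 0) (n k l : ℕ)
    (hk : k < n) : auxΨ E n (E k l) = 0 := by
  rw [auxΨ_unit E hm, if_pos (Finset.mem_range.2 hk), sub_self]

lemma auxΨ_unit_norm (E : ℕ → ℕ → M)
    (hm : ∀ i j k l, E i j * E k l = if j = k then E i l else 0)
    (hn1 : ∀ i j, ‖E i j‖ = 1) (n k l : ℕ) : ‖auxΨ E n (E k l)‖ ≤ 2 := by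
  rw [auxΨ_unit E hm]
  refine (norm_sub_le _ _).trans ?_
  have h1 : ‖if k ∈ Finset.range n then E k l else 0‖ ≤ 1 := by
    split_ifs
    · rw [hn1]
    · simp
  rw [hn1]
  linarith

lemma aux_flip (P : ProjTensorSquare M) (E : ℕ → ℕ → M) (n : ℕ) :
    P.flip (auxT P E n) = auxT P E n := by
  rw [auxT, map_smul]
  congr 1
  rw [map_sum]
  calc ∑ i ∈ Finset.range n, P.flip (∑ j ∈ Finset.range n, P.tmul (E i j) (E j i))
      = ∑ i ∈ Finset.range n, ∑ j ∈ Finset.range n, P.tmul (E j i) (E i j) := by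
        refine Finset.sum_congr rfl fun i _ => ?_
        rw [map_sum]
        exact Finset.sum_congr rfl fun j _ => P.flip_tmul _ _
    _ = ∑ i ∈ Finset.range n, ∑ j ∈ Finset.range n, P.tmul (E i j) (E j i) :=
        Finset.sum_comm

end AuxMatrix

/-- The Banach algebra `M_ℕ(ℂ)` of `ℕ×ℕ` complex matrices with finite
`ℓ¹`-norm of the entries (presented as a Banach algebra `M` isometrically isomorphic, as a
Banach space, to `ℓ¹(ℕ×ℕ)`, in such a way that the multiplication is matrix multiplication)
is symmetrically pseudo-amenable; specifically, `t_n = (1/n) ∑_{i,j<n} E_{ij} ⊗ E_{ji}`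
(with `E_{ij}` the matrix units) forms a symmetric approximate diagonal. -/
theorem matrixAlgebra_symmPseudoAmenable {M : Type} [NonUnitalNormedRing M]
    [NormedSpace ℂ M] [IsScalarTower ℂ M M] [SMulCommClass ℂ M M] [CompleteSpace M]
    (e : M ≃ₗᵢ[ℂ] lp (fun _ : ℕ × ℕ => ℂ) 1)
    (hmul : ∀ A B : M, ∀ q : ℕ × ℕ,
      (e (A * B) : ∀ _ : ℕ × ℕ, ℂ) q = ∑' j : ℕ, (e A : ∀ _ : ℕ × ℕ, ℂ) (q.1, j) *
        (e B : ∀ _ : ℕ × ℕ, ℂ) (j, q.2))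
    (P : ProjTensorSquare M) :
    -- the matrix units
    letI E : ℕ → ℕ → M := fun i j => e.symm (lp.single 1 (i, j) (1 : ℂ))
    -- the net `t_n = (1/n) ∑_{i,j<n} E_{ij} ⊗ E_{ji}`
    letI t : ℕ → P.T := fun n => (n : ℂ)⁻¹ •
      ∑ i ∈ Finset.range n, ∑ j ∈ Finset.range n, P.tmul (E i j) (E j i)
    P.IsSymmApproxDiagonal (atTop : Filter ℕ) t ∧ P.SymmPseudoAmenable := by

  let E : ℕ → ℕ → M := fun i j => e.symm (lp.single 1 (i, j) (1 : ℂ))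
  let t : ℕ → P.T := fun n => (n : ℂ)⁻¹ •
    ∑ i ∈ Finset.range n, ∑ j ∈ Finset.range n, P.tmul (E i j) (E j i)
  show P.IsSymmApproxDiagonal (atTop : Filter ℕ) t ∧ P.SymmPseudoAmenable
  have hE : ∀ i j, E i j = e.symm (lp.single 1 (i, j) (1 : ℂ)) := fun _ _ => rfl
  have ht : ∀ n, t n = auxT P E n := fun _ => rfl
  have hm : ∀ i j k l, E i j * E k l = if j = k then E i l else 0 := aux_mul e hmul E hE
  have hn1 : ∀ i j, ‖E i j‖ = 1 := aux_norm e E hE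
  have hmain : P.IsSymmApproxDiagonal (atTop : Filter ℕ) t := by
    refine ⟨fun n => by rw [ht]; exact aux_flip P E n, ?_, ?_⟩
    · intro A
      refine squeeze_zero_norm (a := fun n : ℕ => 2 * ∑' (q : {q : ℕ × ℕ //
        q ∉ Finset.range n ×ˢ Finset.range n}), ‖(e A : ∀ _ : ℕ × ℕ, ℂ) q.1‖)
        (fun n => ?_) (aux_tail_tendsto e A)
      rw [ht, ← auxΦ_eq]
      refine aux_key e E hE (auxΦ P E n) (Finset.range n ×ˢ Finset.range n)
        (fun q hq => ?_) (fun q => auxΦ_unit_norm P E hm hn1 n q.1 q.2) A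
      rw [Finset.mem_product, Finset.mem_range, Finset.mem_range] at hq
      exact auxΦ_unit_zero P E hm n q.1 q.2 hq.1 hq.2
    · intro A
      rw [← tendsto_sub_nhds_zero_iff]
      refine squeeze_zero_norm (a := fun n : ℕ => 2 * ∑' (q : {q : ℕ × ℕ //
        q ∉ Finset.range n ×ˢ Finset.range n}), ‖(e A : ∀ _ : ℕ × ℕ, ℂ) q.1‖)
        (fun n => ?_) (aux_tail_tendsto e A)
      have hrw : P.π (t n) * A - A = auxΨ E n A := by
        rw [ht, aux_pi P E hm, auxΨ_apply]
      rw [hrw]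
      refine aux_key e E hE (auxΨ E n) (Finset.range n ×ˢ Finset.range n)
        (fun q hq => ?_) (fun q => auxΨ_unit_norm E hm hn1 n q.1 q.2) A
      rw [Finset.mem_product, Finset.mem_range, Finset.mem_range] at hq
      exact auxΨ_unit_zero E hm n q.1 q.2 hq.1
  exact ⟨hmain, ℕ, atTop, t, atTop_neBot, hmain⟩
end

section
/- If 𝔘 is a symmetrically amenable Banach algebra and X is a Banach 𝔘-bimodule, then every bounded Jordan derivation from 𝔘 to X is a derivation. -/
open Filter Topology

universe u

/-- A Banach `A`-bimodule: a Banach space with commuting bounded left and right `A`-actions. -/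
structure BanachBimodule (A X : Type u) [NonUnitalNormedRing A] [NormedSpace ℂ A]
    [NormedAddCommGroup X] [NormedSpace ℂ X] where
  /-- the left action `(a, x) ↦ a • x` -/
  lsmul : A →L[ℂ] X →L[ℂ] X
  /-- the right action `(a, x) ↦ x • a` -/
  rsmul : A →L[ℂ] X →L[ℂ] X
  lsmul_mul : ∀ a b x, lsmul (a * b) x = lsmul a (lsmul b x)
  rsmul_mul : ∀ a b x, rsmul (a * b) x = rsmul b (rsmul a x)
  lsmul_rsmul : ∀ a b x, lsmul a (rsmul b x) = rsmul b (lsmul a x)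

namespace BanachBimodule

variable {A X : Type u} [NonUnitalNormedRing A] [NormedSpace ℂ A]
  [NormedAddCommGroup X] [NormedSpace ℂ X]

/-- `D(ab) = D(a)·b + a·D(b)` -/
def IsDerivation (M : BanachBimodule A X) (D : A → X) : Prop :=
  ∀ a b, D (a * b) = M.rsmul b (D a) + M.lsmul a (D b)

/-- `D(ab + ba) = D(a)·b + a·D(b) + D(b)·a + b·D(a)` -/
def IsJordanDerivation (M : BanachBimodule A X) (D : A → X) : Prop :=
  ∀ a b, D (a * b + b * a) =
    M.rsmul b (D a) + M.lsmul a (D b) + M.rsmul a (D b) + M.lsmul b (D a)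

/-- `D(ab − ba) = D(a)·b + a·D(b) − D(b)·a − b·D(a)` -/
def IsLieDerivation (M : BanachBimodule A X) (D : A → X) : Prop :=
  ∀ a b, D (a * b - b * a) =
    M.rsmul b (D a) + M.lsmul a (D b) - M.rsmul a (D b) - M.lsmul b (D a)

/-- the center `Z_𝔘(X) = {x ∈ X | a·x = x·a for all a ∈ 𝔘}` -/
def center (M : BanachBimodule A X) : Set X := {x | ∀ a, M.lsmul a x = M.rsmul a x}

/-- the left action extended to the `ℓ¹`-unitization `𝔘♯`, via `1 • x = x` -/
noncomputable def uLsmul (M : BanachBimodule A X) (a : WithLp 1 (Unitization ℂ A)) (x : X) : X :=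
  (WithLp.equiv 1 (Unitization ℂ A) a).fst • x + M.lsmul ((WithLp.equiv 1 (Unitization ℂ A)) a).snd x

/-- the right action extended to the `ℓ¹`-unitization `𝔘♯`, via `x • 1 = x` -/
noncomputable def uRsmul (M : BanachBimodule A X) (a : WithLp 1 (Unitization ℂ A)) (x : X) : X :=
  (WithLp.equiv 1 (Unitization ℂ A) a).fst • x + M.rsmul ((WithLp.equiv 1 (Unitization ℂ A)) a).snd x

end BanachBimodule

/-- A Banach algebra is symmetrically amenable if it has a *bounded* approximate diagonal
consisting of symmetric tensors. -/
def ProjTensorSquare.SymmAmenable {A : Type u} [NonUnitalNormedRing A] [NormedSpace ℂ A]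
    [IsScalarTower ℂ A A] [SMulCommClass ℂ A A] [CompleteSpace A]
    (P : ProjTensorSquare A) : Prop :=
  ∃ (ι : Type u) (l : Filter ι) (t : ι → P.T), l.NeBot ∧ P.IsSymmApproxDiagonal l t ∧
    ∃ C : ℝ, ∀ i, ‖t i‖ ≤ C


section JordanAux

set_option linter.unusedSectionVars false

variable {A X : Type u} [NonUnitalNormedRing A] [NormedSpace ℂ A]
  [IsScalarTower ℂ A A] [SMulCommClass ℂ A A] [CompleteSpace A]
  [NormedAddCommGroup X] [NormedSpace ℂ X]

private lemma clm_tendsto {E F : Type*} [NormedAddCommGroup E] [NormedSpace ℂ E]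
    [NormedAddCommGroup F] [NormedSpace ℂ F] {ι : Type*} {l : Filter ι} {u : ι → E} {x : E}
    (f : E →L[ℂ] F) (h : Filter.Tendsto u l (𝓝 x)) :
    Filter.Tendsto (fun i => f (u i)) l (𝓝 (f x)) :=
  (f.continuous.tendsto x).comp h

private lemma ptEq (P : ProjTensorSquare A) {W : Type u}
    [NormedAddCommGroup W] [NormedSpace ℂ W]
    (f f' : P.T →L[ℂ] W) (h : ∀ u v, f (P.tmul u v) = f' (P.tmul u v)) (s : P.T) :
    f s = f' s := by
  obtain ⟨u, v, -, hsum, -⟩ := P.exists_rep s 1 one_pos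
  have h1 : HasSum (fun n => f (P.tmul (u n) (v n))) (f s) := hsum.mapL f
  have h2 : HasSum (fun n => f' (P.tmul (u n) (v n))) (f' s) := hsum.mapL f'
  simp only [h] at h1
  exact h1.unique h2

private noncomputable def Gclm (M : BanachBimodule A X) (D : A →L[ℂ] X) :
    A →L[ℂ] A →L[ℂ] X :=
  ((ContinuousLinearMap.compL ℂ A A X D).comp (ContinuousLinearMap.mul ℂ A))
    - (M.rsmul.flip.comp D)
    - (((ContinuousLinearMap.compL ℂ A X X).flip D).comp M.lsmul)

private lemma Gclm_apply (M : BanachBimodule A X) (D : A →L[ℂ] X) (a b : A) :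
    Gclm M D a b = D (a*b) - M.rsmul b (D a) - M.lsmul a (D b) := by
  simp [Gclm, ContinuousLinearMap.compL_apply, ContinuousLinearMap.mul_apply']

private noncomputable def Hbil (M : BanachBimodule A X) (D : A →L[ℂ] X) (c : A) :
    A →L[ℂ] A →L[ℂ] X :=
  (M.rsmul.flip).comp ((Gclm M D) c)

private lemma Hbil_apply (M : BanachBimodule A X) (D : A →L[ℂ] X) (c u v : A) :
    Hbil M D c u v = M.rsmul v (Gclm M D c u) := by
  simp [Hbil]

private noncomputable def Kbil (M : BanachBimodule A X) (D : A →L[ℂ] X) (c : A) :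
    A →L[ℂ] A →L[ℂ] X :=
  (((ContinuousLinearMap.compL ℂ A X X).flip ((Gclm M D).flip c)).comp M.lsmul)

private lemma Kbil_apply (M : BanachBimodule A X) (D : A →L[ℂ] X) (c u v : A) :
    Kbil M D c u v = M.lsmul u (Gclm M D v c) := by
  simp [Kbil, ContinuousLinearMap.compL_apply]

private noncomputable def Psib (M : BanachBimodule A X) (x : X) :
    A →L[ℂ] A →L[ℂ] X :=
  (((ContinuousLinearMap.compL ℂ A X X).flip (M.rsmul.flip x)).comp M.lsmul)

private lemma Psib_apply (M : BanachBimodule A X) (x : X) (u v : A) :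
    Psib M x u v = M.lsmul u (M.rsmul v x) := by
  simp [Psib, ContinuousLinearMap.compL_apply]

variable {M : BanachBimodule A X} {D : A →L[ℂ] X}

private lemma gclm_anti (hD : M.IsJordanDerivation D) (a b : A) :
    Gclm M D b a = - Gclm M D a b := by
  have h := hD a b
  rw [map_add] at h
  have h' : D (b*a) = M.rsmul b (D a) + M.lsmul a (D b) + M.rsmul a (D b)
      + M.lsmul b (D a) - D (a*b) := by rw [← h]; abel
  simp only [Gclm_apply]
  rw [h']; abel

private lemma D_sq (hD : M.IsJordanDerivation D) (a : A) :
    D (a*a) = M.rsmul a (D a) + M.lsmul a (D a) := by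
  have h := hD a a
  rw [map_add] at h
  have h2 : (2:ℂ) • D (a*a) = (2:ℂ) • (M.rsmul a (D a) + M.lsmul a (D a)) := by
    rw [two_smul, two_smul, h]; abel
  exact smul_right_injective X (two_ne_zero) h2

private lemma gclm_cocycle (M : BanachBimodule A X) (D : A →L[ℂ] X) (a b c : A) :
    Gclm M D (a*b) c = M.lsmul a (Gclm M D b c) + Gclm M D a (b*c)
      - M.rsmul c (Gclm M D a b) := by
  simp only [Gclm_apply, map_sub]
  rw [mul_assoc]
  simp only [M.lsmul_mul, M.rsmul_mul, M.lsmul_rsmul]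
  abel

private lemma herstein (hD : M.IsJordanDerivation D) (a b : A) :
    D (a*(b*a)) = M.rsmul a (M.rsmul b (D a)) + M.lsmul a (M.lsmul b (D a))
      + M.rsmul a (M.lsmul a (D b)) := by
  have l0 := hD a b
  have l1 := hD a (a*b + b*a)
  have l2 := hD (a*a) b
  have sq := D_sq hD a
  have h2 : (2:ℂ) • D (a*(b*a)) = (2:ℂ) • (M.rsmul a (M.rsmul b (D a))
      + M.lsmul a (M.lsmul b (D a)) + M.rsmul a (M.lsmul a (D b))) := by
    rw [two_smul, two_smul]
    calc D (a*(b*a)) + D (a*(b*a))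
        = D (a * (a * b + b * a) + (a * b + b * a) * a) - D (a * a * b + b * (a * a)) := by
          simp only [mul_add, add_mul, map_add, mul_assoc]; abel
      _ = (M.rsmul (a*b + b*a) (D a) + M.lsmul a (D (a*b + b*a))
            + M.rsmul a (D (a*b + b*a)) + M.lsmul (a*b + b*a) (D a))
          - (M.rsmul b (D (a*a)) + M.lsmul (a*a) (D b)
            + M.rsmul (a*a) (D b) + M.lsmul b (D (a*a))) := by rw [l1, l2]
      _ = _ := by
          rw [l0, sq]
          simp only [map_add, ContinuousLinearMap.add_apply,
            M.lsmul_mul, M.rsmul_mul, M.lsmul_rsmul]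
          abel
  exact smul_right_injective X (two_ne_zero) h2

private lemma tri2 (hD : M.IsJordanDerivation D) (a b : A) :
    Gclm M D (a*b) a = - M.rsmul a (Gclm M D a b) := by
  simp only [Gclm_apply, map_sub]
  rw [mul_assoc, herstein hD a b]
  simp only [M.lsmul_mul, M.rsmul_mul, M.lsmul_rsmul]
  abel

private lemma tri2' (hD : M.IsJordanDerivation D) (a b c : A) :
    Gclm M D (a*b) c + Gclm M D (c*b) a + M.rsmul a (Gclm M D c b)
      + M.rsmul c (Gclm M D a b) = 0 := by
  have h := tri2 hD (a+c) b
  have h1 := tri2 hD a b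
  have h2 := tri2 hD c b
  simp only [add_mul, map_add, ContinuousLinearMap.add_apply] at h
  rw [h1, h2] at h
  calc Gclm M D (a*b) c + Gclm M D (c*b) a + M.rsmul a (Gclm M D c b)
        + M.rsmul c (Gclm M D a b)
      = (-M.rsmul a (Gclm M D a b) + Gclm M D (c*b) a
          + (Gclm M D (a*b) c + -M.rsmul c (Gclm M D c b)))
        - (-(M.rsmul a (Gclm M D a b) + M.rsmul c (Gclm M D a b) +
            (M.rsmul a (Gclm M D c b) + M.rsmul c (Gclm M D c b)))) := by abel
    _ = 0 := by rw [h]; simp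

private lemma gkey (hD : M.IsJordanDerivation D) (a b c : A) :
    Gclm M D a (b*c - c*b) = M.rsmul a (Gclm M D b c) - M.lsmul a (Gclm M D b c) := by
  have co2 := gclm_cocycle M D a c b
  have t2 := tri2' hD a c b
  have an2 := gclm_anti hD a (b*c)
  have an3 := gclm_anti hD b c
  rw [an2] at t2
  rw [an3] at co2
  simp only [map_neg] at co2
  have hc := sub_eq_zero_of_eq co2
  have hz : (Gclm M D a (b*c) - Gclm M D a (c*b))
      - (M.rsmul a (Gclm M D b c) - M.lsmul a (Gclm M D b c)) = 0 := by
    calc (Gclm M D a (b*c) - Gclm M D a (c*b))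
          - (M.rsmul a (Gclm M D b c) - M.lsmul a (Gclm M D b c))
        = (Gclm M D (a*c) b - (-M.lsmul a (Gclm M D b c) + Gclm M D a (c*b)
            - M.rsmul b (Gclm M D a c)))
          - (Gclm M D (a*c) b + -Gclm M D a (b*c) + M.rsmul a (Gclm M D b c)
            + M.rsmul b (Gclm M D a c)) := by abel
      _ = 0 := by rw [hc, t2]; simp
  rw [map_sub]
  exact sub_eq_zero.mp hz

private lemma w2id (M : BanachBimodule A X) (D : A →L[ℂ] X) (b c y : A) :
    M.rsmul y (Gclm M D b c) = M.lsmul b (Gclm M D c y) - Gclm M D (b*c) y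
      + Gclm M D b (c*y) := by
  have co := gclm_cocycle M D b c y
  have hz := sub_eq_zero_of_eq co
  calc M.rsmul y (Gclm M D b c)
      = (M.lsmul b (Gclm M D c y) - Gclm M D (b*c) y + Gclm M D b (c*y))
        + (Gclm M D (b*c) y - (M.lsmul b (Gclm M D c y) + Gclm M D b (c*y)
          - M.rsmul y (Gclm M D b c))) := by abel
    _ = _ := by rw [hz]; simp

end JordanAux

set_option maxHeartbeats 2000000 in
/-- If `𝔘` is a symmetrically amenable Banach algebra and `X` is a Banach
`𝔘`-bimodule, then every bounded Jordan derivation from `𝔘` to `X` is a derivation. -/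
theorem jordanDerivation_isDerivation_of_symmAmenable {A X : Type u} [NonUnitalNormedRing A] [NormedSpace ℂ A]
    [IsScalarTower ℂ A A] [SMulCommClass ℂ A A] [CompleteSpace A]
    [NormedAddCommGroup X] [NormedSpace ℂ X] [CompleteSpace X]
    (P : ProjTensorSquare A) (hP : P.SymmAmenable) (M : BanachBimodule A X) :
    ∀ D : A →L[ℂ] X, M.IsJordanDerivation D → M.IsDerivation D := by
  intro D hD
  obtain ⟨ι, l, t, hl, ⟨hsym, hcomm, hπ⟩, -, -⟩ := hP
  haveI := hl
  -- choose lifts of bounded bilinear maps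
  have hlift : ∀ F : A →L[ℂ] A →L[ℂ] X,
      ∃ gg : P.T →L[ℂ] X, ∀ u v, gg (P.tmul u v) = F u v := by
    intro F
    obtain ⟨gg, h1, -⟩ := P.lift F
    exact ⟨gg, h1⟩
  choose lft hlft using hlift
  set g : P.T →L[ℂ] X := lft (Gclm M D) with hgdef
  have hg : ∀ u v, g (P.tmul u v) = Gclm M D u v := hlft _
  have hhv : ∀ (c u v : A), lft (Hbil M D c) (P.tmul u v) = M.rsmul v (Gclm M D c u) := by
    intro c u v; rw [hlft]; exact Hbil_apply M D c u v
  have hkv : ∀ (c u v : A), lft (Kbil M D c) (P.tmul u v) = M.lsmul u (Gclm M D v c) := by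
    intro c u v; rw [hlft]; exact Kbil_apply M D c u v
  have hΨv : ∀ (x : X) (u v : A), lft (Psib M x) (P.tmul u v) = M.lsmul u (M.rsmul v x) := by
    intro x u v; rw [hlft]; exact Psib_apply M x u v
  -- structural pointwise identities
  have S1 : ∀ (c : A) (s : P.T), P.π (P.lmul c s) = c * P.π s := by
    intro c s
    have h := ptEq P (P.π.comp (P.lmul c)) ((ContinuousLinearMap.mul ℂ A c).comp P.π)
      (fun u v => by
        simp [P.π_tmul, P.lmul_tmul, ContinuousLinearMap.mul_apply', mul_assoc]) s
    simpa using h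
  have S2 : ∀ (c : A) (s : P.T), P.π (P.rmul c s) = P.π s * c := by
    intro c s
    have h := ptEq P (P.π.comp (P.rmul c)) (((ContinuousLinearMap.mul ℂ A).flip c).comp P.π)
      (fun u v => by
        simp [P.π_tmul, P.rmul_tmul, ContinuousLinearMap.mul_apply', mul_assoc]) s
    simpa using h
  have S4 : ∀ (c : A) (s : P.T), P.flip (P.rmul c s) = P.rcirc c (P.flip s) := by
    intro c s
    have h := ptEq P (P.flip.comp (P.rmul c)) ((P.rcirc c).comp P.flip)
      (fun u v => by simp [P.flip_tmul, P.rmul_tmul, P.rcirc_tmul]) s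
    simpa using h
  have S5 : ∀ (c : A) (s : P.T), P.flip (P.lmul c s) = P.lcirc c (P.flip s) := by
    intro c s
    have h := ptEq P (P.flip.comp (P.lmul c)) ((P.lcirc c).comp P.flip)
      (fun u v => by simp [P.flip_tmul, P.lmul_tmul, P.lcirc_tmul]) s
    simpa using h
  have S6 : ∀ s : P.T, g (P.flip s) = - g s := by
    intro s
    have h := ptEq P (g.comp P.flip) (-g)
      (fun u v => by
        simp only [ContinuousLinearMap.comp_apply, ContinuousLinearMap.neg_apply,
          P.flip_tmul, hg]
        exact gclm_anti hD u v) s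
    simpa using h
  have S7 : ∀ (a b : A) (s : P.T), P.rmul b (P.rmul a s) = P.rmul (a*b) s := by
    intro a b s
    have h := ptEq P ((P.rmul b).comp (P.rmul a)) (P.rmul (a*b))
      (fun u v => by simp [P.rmul_tmul, mul_assoc]) s
    simpa using h
  have S9 : ∀ (a b : A) (s : P.T), P.lcirc b (P.rmul a s) = P.rmul a (P.lcirc b s) := by
    intro a b s
    have h := ptEq P ((P.lcirc b).comp (P.rmul a)) ((P.rmul a).comp (P.lcirc b))
      (fun u v => by simp [P.rmul_tmul, P.lcirc_tmul, mul_assoc]) s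
    simpa using h
  have S10 : ∀ (a b : A) (s : P.T), P.rcirc b (P.rmul a s) = P.rmul a (P.rcirc b s) := by
    intro a b s
    have h := ptEq P ((P.rcirc b).comp (P.rmul a)) ((P.rmul a).comp (P.rcirc b))
      (fun u v => by simp [P.rmul_tmul, P.rcirc_tmul]) s
    simpa using h
  have RS : ∀ (y z : A) (s : P.T), P.rmul (y - z) s = P.rmul y s - P.rmul z s := by
    intro y z s
    have h := ptEq P (P.rmul (y - z)) (P.rmul y - P.rmul z)
      (fun u v => by
        simp only [P.rmul_tmul, ContinuousLinearMap.sub_apply, mul_sub, map_sub]) s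
    simpa using h
  -- the lift identities coming from the cocycle identity
  have E1 : ∀ (c : A) (s : P.T), lft (Hbil M D c) s
      = M.lsmul c (g s) - g (P.lmul c s) + Gclm M D c (P.π s) := by
    intro c s
    have h := ptEq P (lft (Hbil M D c))
      ((M.lsmul c).comp g - g.comp (P.lmul c) + (Gclm M D c).comp P.π)
      (fun u v => by
        simp only [ContinuousLinearMap.add_apply, ContinuousLinearMap.sub_apply,
          ContinuousLinearMap.comp_apply, hg, P.lmul_tmul, P.π_tmul, hhv]
        have co := gclm_cocycle M D c u v
        rw [co]; abel) s
    simpa using h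
  have E2 : ∀ (c : A) (s : P.T), lft (Kbil M D c) s
      = M.rsmul c (g s) - g (P.rmul c s) + Gclm M D (P.π s) c := by
    intro c s
    have h := ptEq P (lft (Kbil M D c))
      ((M.rsmul c).comp g - g.comp (P.rmul c) + ((Gclm M D).flip c).comp P.π)
      (fun u v => by
        simp only [ContinuousLinearMap.add_apply, ContinuousLinearMap.sub_apply,
          ContinuousLinearMap.comp_apply, ContinuousLinearMap.flip_apply,
          hg, P.rmul_tmul, P.π_tmul, hkv]
        have co := gclm_cocycle M D u v c
        rw [co]; abel) s
    simpa using h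
  have E3 : ∀ (c : A) (s : P.T), lft (Hbil M D c) s - lft (Kbil M D c) s
      + g (P.lcirc c s) - g (P.rcirc c s) = 0 := by
    intro c s
    have h := ptEq P
      (lft (Hbil M D c) - lft (Kbil M D c) + g.comp (P.lcirc c) - g.comp (P.rcirc c)) 0
      (fun u v => by
        simp only [ContinuousLinearMap.add_apply, ContinuousLinearMap.sub_apply,
          ContinuousLinearMap.comp_apply, ContinuousLinearMap.zero_apply,
          hg, P.lcirc_tmul, P.rcirc_tmul, hhv, hkv]
        have co := gclm_cocycle M D u c v
        have an1 : Gclm M D c u = - Gclm M D u c := gclm_anti hD u c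
        have an2 : Gclm M D v c = - Gclm M D c v := gclm_anti hD c v
        rw [an1, an2, co]
        simp only [map_neg]
        abel) s
    simpa using h
  have H1 : ∀ (c a' : A) (s : P.T), lft (Hbil M D c) (P.rmul a' s)
      = M.rsmul a' (lft (Hbil M D c) s) := by
    intro c a' s
    have h := ptEq P ((lft (Hbil M D c)).comp (P.rmul a'))
      ((M.rsmul a').comp (lft (Hbil M D c)))
      (fun u v => by
        simp only [ContinuousLinearMap.comp_apply, P.rmul_tmul, hhv]
        rw [M.rsmul_mul]) s
    simpa using h
  -- pointwise facts at the approximate diagonal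
  have P1 : ∀ i, g (t i) = 0 := by
    intro i
    have h := S6 (t i)
    rw [hsym i] at h
    have h2 : (2:ℂ) • g (t i) = (2:ℂ) • (0 : X) := by
      rw [two_smul, smul_zero]
      nth_rewrite 1 [h]
      exact neg_add_cancel _
    exact smul_right_injective X (two_ne_zero) h2
  have P2 : ∀ (c : A) (i : ι), g (P.rcirc c (t i)) = - g (P.rmul c (t i)) := by
    intro c i
    have e : P.rcirc c (t i) = P.flip (P.rmul c (t i)) := by
      conv_lhs => rw [← hsym i]
      rw [← S4]
    rw [e, S6]
  have P3 : ∀ (c : A) (i : ι), g (P.lcirc c (t i)) = - g (P.lmul c (t i)) := by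
    intro c i
    have e : P.lcirc c (t i) = P.flip (P.lmul c (t i)) := by
      conv_lhs => rw [← hsym i]
      rw [← S5]
    rw [e, S6]
  -- the key exact evaluations at the diagonal (★)
  have starmain : ∀ (c : A) (i : ι),
      Gclm M D c (P.π (t i)) = g (P.lmul c (t i)) - g (P.rmul c (t i))
      ∧ lft (Hbil M D c) (t i) = - g (P.rmul c (t i)) := by
    intro c i
    have α := E1 c (t i)
    have β := E2 c (t i)
    have γ := E3 c (t i)
    rw [P1 i, map_zero] at α β
    rw [gclm_anti hD c (P.π (t i))] at β
    rw [P2 c i, P3 c i] at γ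
    rw [α, β] at γ
    have hpi : Gclm M D c (P.π (t i)) = g (P.lmul c (t i)) - g (P.rmul c (t i)) := by
      have h2 : (2:ℂ) • (Gclm M D c (P.π (t i))
          - (g (P.lmul c (t i)) - g (P.rmul c (t i)))) = (2:ℂ) • (0:X) := by
        rw [two_smul, smul_zero]
        calc (Gclm M D c (P.π (t i)) - (g (P.lmul c (t i)) - g (P.rmul c (t i))))
              + (Gclm M D c (P.π (t i)) - (g (P.lmul c (t i)) - g (P.rmul c (t i))))
            = (0 - g (P.lmul c (t i)) + Gclm M D c (P.π (t i)))
                - (0 - g (P.rmul c (t i)) + -Gclm M D c (P.π (t i)))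
                + -g (P.lmul c (t i)) - -g (P.rmul c (t i)) := by abel
          _ = 0 := γ
      have h3 := smul_right_injective X (two_ne_zero) h2
      exact sub_eq_zero.mp h3
    refine ⟨hpi, ?_⟩
    rw [α, hpi]; abel
  -- limit facts
  have T2 : ∀ c : A, Filter.Tendsto (fun i => P.lcirc c (t i) - P.rcirc c (t i)) l (𝓝 0) := by
    intro c
    have he : ∀ i, P.lcirc c (t i) - P.rcirc c (t i)
        = P.flip (P.lmul c (t i) - P.rmul c (t i)) := by
      intro i
      rw [map_sub]
      congr 1
      · conv_lhs => rw [← hsym i]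
        rw [← S5]
      · conv_lhs => rw [← hsym i]
        rw [← S4]
    have h0 := clm_tendsto P.flip (hcomm c)
    rw [map_zero] at h0
    exact h0.congr (fun i => (he i).symm)
  have T4 : ∀ c : A, Filter.Tendsto (fun i => c * P.π (t i)) l (𝓝 c) := by
    intro c
    have he : ∀ i, c * P.π (t i)
        = P.π (P.lmul c (t i) - P.rmul c (t i)) + P.π (t i) * c := by
      intro i
      rw [map_sub, S1, S2]; abel
    have h1 := clm_tendsto P.π (hcomm c)
    rw [map_zero] at h1
    have h2 := h1.add (hπ c)
    rw [zero_add] at h2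
    exact h2.congr (fun i => (he i).symm)
  have P5 : ∀ c : A, Filter.Tendsto (fun i => Gclm M D c (P.π (t i))) l (𝓝 0) := by
    intro c
    have he : ∀ i, Gclm M D c (P.π (t i)) = g (P.lmul c (t i) - P.rmul c (t i)) := by
      intro i
      rw [map_sub]
      exact (starmain c i).1
    have h1 := clm_tendsto g (hcomm c)
    rw [map_zero] at h1
    exact h1.congr (fun i => (he i).symm)
  -- the main limit relation (M1)
  have M1 : ∀ a b : A, Filter.Tendsto (fun i => g (P.rmul (a*b) (t i))
      - M.rsmul b (g (P.rmul a (t i))) - M.rsmul a (g (P.rmul b (t i)))) l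
      (𝓝 (Gclm M D a b)) := by
    intro a b
    have key : ∀ i, g (P.rmul (a*b) (t i)) - M.rsmul b (g (P.rmul a (t i)))
        - M.rsmul a (g (P.rmul b (t i)))
        = Gclm M D (P.π (t i) * a) b
          - (g (P.rmul a (P.lcirc b (t i))) - g (P.rmul a (P.rcirc b (t i)))) := by
      intro i
      have e2 := E2 b (P.rmul a (t i))
      rw [S7, S2] at e2
      have e3 := E3 b (P.rmul a (t i))
      rw [S9, S10, H1, (starmain b i).2, map_neg] at e3
      have z2 := sub_eq_zero_of_eq e2
      calc g (P.rmul (a*b) (t i)) - M.rsmul b (g (P.rmul a (t i)))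
            - M.rsmul a (g (P.rmul b (t i)))
          = (Gclm M D (P.π (t i) * a) b
              - (g (P.rmul a (P.lcirc b (t i))) - g (P.rmul a (P.rcirc b (t i)))))
            + (lft (Kbil M D b) (P.rmul a (t i))
              - (M.rsmul b (g (P.rmul a (t i))) - g (P.rmul (a*b) (t i))
                + Gclm M D (P.π (t i) * a) b))
            + (-M.rsmul a (g (P.rmul b (t i))) - lft (Kbil M D b) (P.rmul a (t i))
              + g (P.rmul a (P.lcirc b (t i))) - g (P.rmul a (P.rcirc b (t i)))) := by abel
        _ = _ := by rw [z2, e3]; simp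
    have l1 : Filter.Tendsto (fun i => Gclm M D (P.π (t i) * a) b) l
        (𝓝 (Gclm M D a b)) := by
      have h := clm_tendsto ((Gclm M D).flip b) (hπ a)
      simpa using h
    have l2 : Filter.Tendsto (fun i => g (P.rmul a (P.lcirc b (t i)))
        - g (P.rmul a (P.rcirc b (t i)))) l (𝓝 0) := by
      have h := clm_tendsto (g.comp (P.rmul a)) (T2 b)
      rw [map_zero] at h
      exact h.congr (fun i => by simp [map_sub])
    have h := l1.sub l2
    rw [sub_zero] at h
    exact h.congr (fun i => (key i).symm)
  -- now fix a b and prove the derivation identity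
  intro a b
  have hΔ : Filter.Tendsto (fun i => g (P.rmul (a*b) (t i)) - g (P.rmul (b*a) (t i))) l
      (𝓝 (Gclm M D a b - Gclm M D b a)) :=
    ((M1 a b).sub (M1 b a)).congr (fun i => by abel)
  have hW2 : Filter.Tendsto (fun i => M.rsmul (P.π (t i)) (Gclm M D a b)) l
      (𝓝 (Gclm M D a b)) := by
    have l1 := clm_tendsto (M.lsmul a) (P5 b)
    rw [map_zero] at l1
    have l2 := P5 (a*b)
    have l3 := clm_tendsto (Gclm M D a) (T4 b)
    have h := (l1.sub l2).add l3
    rw [sub_zero, zero_add] at h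
    exact h.congr (fun i => (w2id M D a b (P.π (t i))).symm)
  -- the Psi identity
  have PSIid : ∀ s : P.T, lft (Hbil M D (a*b - b*a)) s
      = lft (Psib M (Gclm M D a b)) s - M.rsmul (P.π s) (Gclm M D a b) := by
    intro s
    have h := ptEq P (lft (Hbil M D (a*b - b*a)))
      (lft (Psib M (Gclm M D a b)) - (M.rsmul.flip (Gclm M D a b)).comp P.π)
      (fun u v => by
        simp only [ContinuousLinearMap.sub_apply, ContinuousLinearMap.comp_apply,
          ContinuousLinearMap.flip_apply, P.π_tmul, hhv, hΨv]
        have k := gkey hD u a b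
        have an : Gclm M D (a*b - b*a) u = - Gclm M D u (a*b - b*a) :=
          gclm_anti hD u (a*b - b*a)
        rw [an, k, M.rsmul_mul]
        simp only [map_neg, map_sub]
        rw [M.lsmul_rsmul]
        abel) s
    simpa using h
  have hψeq : ∀ i, lft (Psib M (Gclm M D a b)) (t i)
      = M.rsmul (P.π (t i)) (Gclm M D a b)
        - (g (P.rmul (a*b) (t i)) - g (P.rmul (b*a) (t i))) := by
    intro i
    have h := PSIid (t i)
    rw [(starmain (a*b - b*a) i).2] at h
    have hsplit : g (P.rmul (a*b - b*a) (t i))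
        = g (P.rmul (a*b) (t i)) - g (P.rmul (b*a) (t i)) := by
      rw [RS, map_sub]
    rw [hsplit] at h
    calc lft (Psib M (Gclm M D a b)) (t i)
        = (lft (Psib M (Gclm M D a b)) (t i) - M.rsmul (P.π (t i)) (Gclm M D a b))
          + M.rsmul (P.π (t i)) (Gclm M D a b) := by abel
      _ = _ := by rw [← h]; abel
  have hΨ : Filter.Tendsto (fun i => lft (Psib M (Gclm M D a b)) (t i)) l
      (𝓝 (Gclm M D a b - (Gclm M D a b - Gclm M D b a))) :=
    (hW2.sub hΔ).congr (fun i => (hψeq i).symm)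
  -- centrality of Gclm a b
  have S12 : ∀ (c' : A) (s : P.T), M.lsmul c' (lft (Psib M (Gclm M D a b)) s)
      = lft (Psib M (Gclm M D a b)) (P.lmul c' s) := by
    intro c' s
    have h := ptEq P ((M.lsmul c').comp (lft (Psib M (Gclm M D a b))))
      ((lft (Psib M (Gclm M D a b))).comp (P.lmul c'))
      (fun u v => by
        simp only [ContinuousLinearMap.comp_apply, P.lmul_tmul, hΨv]
        rw [← M.lsmul_mul]) s
    simpa using h
  have S13 : ∀ (c' : A) (s : P.T), M.rsmul c' (lft (Psib M (Gclm M D a b)) s)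
      = lft (Psib M (Gclm M D a b)) (P.rmul c' s) := by
    intro c' s
    have h := ptEq P ((M.rsmul c').comp (lft (Psib M (Gclm M D a b))))
      ((lft (Psib M (Gclm M D a b))).comp (P.rmul c'))
      (fun u v => by
        simp only [ContinuousLinearMap.comp_apply, P.rmul_tmul, hΨv]
        rw [← M.lsmul_rsmul, ← M.rsmul_mul]) s
    simpa using h
  have hCent : ∀ c' : A, M.lsmul c' (Gclm M D a b) = M.rsmul c' (Gclm M D a b) := by
    intro c'
    have hz : Filter.Tendsto (fun i => M.lsmul c' (lft (Psib M (Gclm M D a b)) (t i))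
        - M.rsmul c' (lft (Psib M (Gclm M D a b)) (t i))) l (𝓝 0) := by
      have h := clm_tendsto (lft (Psib M (Gclm M D a b))) (hcomm c')
      rw [map_zero] at h
      exact h.congr (fun i => by rw [map_sub, ← S12, ← S13])
    have hlim2 := (clm_tendsto (M.lsmul c') hΨ).sub (clm_tendsto (M.rsmul c') hΨ)
    have h3 := tendsto_nhds_unique hlim2 hz
    have hV : Gclm M D a b - (Gclm M D a b - Gclm M D b a) = - Gclm M D a b := by
      rw [gclm_anti hD a b]; abel
    rw [hV] at h3
    simp only [map_neg] at h3
    have h4 : -(M.lsmul c' (Gclm M D a b)) = -(M.rsmul c' (Gclm M D a b)) :=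
      sub_eq_zero.mp h3
    exact neg_inj.mp h4
  -- hence Gclm M D y (ab - ba) = 0 for all y, so the h-lift vanishes
  have hGd0 : ∀ y : A, Gclm M D y (a*b - b*a) = 0 := by
    intro y
    rw [gkey hD y a b, hCent y, sub_self]
  have hhd0 : ∀ s : P.T, lft (Hbil M D (a*b - b*a)) s = 0 := by
    intro s
    have h := ptEq P (lft (Hbil M D (a*b - b*a))) 0
      (fun u v => by
        rw [hhv]
        have hz : Gclm M D (a*b - b*a) u = 0 := by
          rw [gclm_anti hD u (a*b - b*a), hGd0 u, neg_zero]
        rw [hz, map_zero]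
        simp) s
    simpa using h
  have hφ0 : ∀ i, g (P.rmul (a*b) (t i)) - g (P.rmul (b*a) (t i)) = 0 := by
    intro i
    have h := (starmain (a*b - b*a) i).2
    rw [hhd0 (t i)] at h
    have h2 : g (P.rmul (a*b - b*a) (t i)) = 0 := neg_eq_zero.mp h.symm
    rw [RS, map_sub] at h2
    exact h2
  have hzero : Filter.Tendsto (fun i => g (P.rmul (a*b) (t i)) - g (P.rmul (b*a) (t i))) l
      (𝓝 0) := tendsto_const_nhds.congr (fun i => (hφ0 i).symm)
  have heq := tendsto_nhds_unique hΔ hzero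
  rw [gclm_anti hD a b] at heq
  have h2 : (2:ℂ) • Gclm M D a b = (2:ℂ) • (0:X) := by
    rw [two_smul, smul_zero]
    calc Gclm M D a b + Gclm M D a b = Gclm M D a b - -Gclm M D a b := by abel
      _ = 0 := heq
  have hx0 : Gclm M D a b = 0 := smul_right_injective X (two_ne_zero) h2
  rw [Gclm_apply, sub_sub] at hx0
  exact sub_eq_zero.mp hx0
end
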